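/- arXiv:math/0703068 — 8 statements merged into one kernel-verified Lean document; each statement's English description precedes it below -/
import Mathlib

section
/- Let M ≥ 0 be an integer and λ ∈ (0,1). Suppose that for m = 1,…,M, each function l_m : ℝ → ℝ has the form l_m(t) = d_m − t for some d_m ≥ 1/λ, or l_m(t) = t − c_m for some c_m ≤ 0. Then there is a constant C(M, λ) > 0, depending only on M and λ, such that ∫_1^{1/λ} ∏_{m=1}^M l_m(t) dt ≥ C(M,λ) ∫_0^{1/λ} ∏_{m=1}^M l_m(t) dt. -/
open MeasureTheory

/-- For M factors that are each of the form `d - t` with `d ≥ 1/λ`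
or `t - c` with `c ≤ 0`, the integral of the product over `[1, 1/λ]` dominates a
constant (depending only on `M` and `λ`) times the integral over `[0, 1/λ]`. -/
theorem stmt0 (M : ℕ) (lam : ℝ) (hlam0 : 0 < lam) (hlam1 : lam < 1) :
    ∃ C : ℝ, 0 < C ∧
      ∀ l : Fin M → ℝ → ℝ,
        (∀ m : Fin M,
          (∃ d : ℝ, 1 / lam ≤ d ∧ ∀ t : ℝ, l m t = d - t) ∨
          (∃ c : ℝ, c ≤ 0 ∧ ∀ t : ℝ, l m t = t - c)) →
        (∫ t in (1 : ℝ)..(1 / lam), ∏ m : Fin M, l m t)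
          ≥ C * ∫ t in (0 : ℝ)..(1 / lam), ∏ m : Fin M, l m t := by
  set L : ℝ := 1 / lam with hLdef
  have hL : 1 < L := one_lt_one_div hlam0 hlam1
  have hL1 : (0:ℝ) < L - 1 := by linarith
  set s : ℝ := (L - 1) / 2 with hsdef
  have hs : 0 < s := by positivity
  set K : ℝ := 2 * L / (L - 1) with hKdef
  have hKpos : 0 < K := by positivity
  have hKrel : K * (L - 1) = 2 * L := div_mul_cancel₀ (2 * L) (ne_of_gt hL1)
  refine ⟨1 / (K ^ M / s + 1), by positivity, ?_⟩
  intro l hl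
  have hcont : ∀ m, Continuous (l m) := by
    intro m
    rcases hl m with ⟨d, _, h⟩ | ⟨c, _, h⟩
    · have : l m = fun t => d - t := funext h
      rw [this]; continuity
    · have : l m = fun t => t - c := funext h
      rw [this]; continuity
  have hP : Continuous fun t => ∏ m : Fin M, l m t := by
    apply continuous_finset_prod
    exact fun m _ => hcont m
  -- nonnegativity of each factor on [0, L]
  have hfac : ∀ (m : Fin M) (t : ℝ), 0 ≤ t → t ≤ L → 0 ≤ l m t := by
    intro m t ht0 htL
    rcases hl m with ⟨d, hd, h⟩ | ⟨c, hc, h⟩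
    · rw [h]; linarith
    · rw [h]; linarith
  have hPnn : ∀ t : ℝ, 0 ≤ t → t ≤ L → 0 ≤ ∏ m : Fin M, l m t := by
    intro t ht0 htL
    exact Finset.prod_nonneg fun m _ => hfac m t ht0 htL
  -- pointwise bound on [0,1]
  have hpt : ∀ t ∈ Set.Icc (0:ℝ) 1, (∏ m : Fin M, l m t) ≤ K ^ M * ∏ m : Fin M, l m (s * t + 1) := by
    intro t ⟨ht0, ht1⟩
    have hst0 : (0:ℝ) ≤ s * t + 1 := by positivity
    have hstL : s * t + 1 ≤ L := by nlinarith
    calc (∏ m : Fin M, l m t) ≤ ∏ m : Fin M, K * l m (s * t + 1) := by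
          apply Finset.prod_le_prod
          · intro m _; exact hfac m t ht0 (by linarith)
          · intro m _
            rcases hl m with ⟨d, hd, h⟩ | ⟨c, hc, h⟩
            · rw [h, h]
              rw [hLdef] at hd
              rw [hKdef, div_mul_eq_mul_div, le_div_iff₀ hL1, hsdef]
              nlinarith [mul_nonneg (sub_nonneg.2 hd) (by linarith : (0:ℝ) ≤ L + 1),
                mul_nonneg (sub_nonneg.2 ht1) (mul_nonneg hL1.le hL1.le)]
            · rw [h, h]
              nlinarith [mul_nonneg hs.le (mul_nonneg ht0 (sub_nonneg.2 ht1)),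
                mul_nonneg (sub_nonneg.2 hc) hL1.le, mul_nonneg hs.le ht0]
      _ = K ^ M * ∏ m : Fin M, l m (s * t + 1) := by
          rw [Finset.prod_mul_distrib, Finset.prod_const, Finset.card_univ, Fintype.card_fin]
  -- integrals
  have hint : ∀ a b : ℝ, IntervalIntegrable (fun t => ∏ m : Fin M, l m t) volume a b :=
    fun a b => hP.intervalIntegrable a b
  have hI1nn : 0 ≤ ∫ t in (1:ℝ)..L, ∏ m : Fin M, l m t := by
    apply intervalIntegral.integral_nonneg hL.le
    intro u hu
    exact hPnn u (by linarith [hu.1]) hu.2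
  have key : (∫ t in (0:ℝ)..1, ∏ m : Fin M, l m t)
      ≤ (K ^ M / s) * ∫ t in (1:ℝ)..L, ∏ m : Fin M, l m t := by
    have step1 : (∫ t in (0:ℝ)..1, ∏ m : Fin M, l m t)
        ≤ ∫ t in (0:ℝ)..1, K ^ M * ∏ m : Fin M, l m (s * t + 1) := by
      apply intervalIntegral.integral_mono_on zero_le_one (hint 0 1)
      · exact (continuous_const.mul (hP.comp (by continuity))).intervalIntegrable 0 1
      · exact hpt
    have step2 : (∫ t in (0:ℝ)..1, K ^ M * ∏ m : Fin M, l m (s * t + 1))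
        = (K ^ M / s) * ∫ t in (1:ℝ)..(s + 1), ∏ m : Fin M, l m t := by
      rw [intervalIntegral.integral_const_mul]
      rw [intervalIntegral.integral_comp_mul_add (fun t => ∏ m : Fin M, l m t) (ne_of_gt hs) 1]
      simp [smul_eq_mul]
      ring
    have step3 : (∫ t in (1:ℝ)..(s + 1), ∏ m : Fin M, l m t)
        ≤ ∫ t in (1:ℝ)..L, ∏ m : Fin M, l m t := by
      apply intervalIntegral.integral_mono_interval le_rfl (by linarith) (by nlinarith)
      · filter_upwards [ae_restrict_mem measurableSet_Ioc] with u hu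
        exact hPnn u (by linarith [hu.1]) hu.2
      · exact hint 1 L
    calc _ ≤ ∫ t in (0:ℝ)..1, K ^ M * ∏ m : Fin M, l m (s * t + 1) := step1
      _ = (K ^ M / s) * ∫ t in (1:ℝ)..(s + 1), ∏ m : Fin M, l m t := step2
      _ ≤ (K ^ M / s) * ∫ t in (1:ℝ)..L, ∏ m : Fin M, l m t := by
          apply mul_le_mul_of_nonneg_left step3 (by positivity)
  have hsplit : (∫ t in (0:ℝ)..L, ∏ m : Fin M, l m t)
      = (∫ t in (0:ℝ)..1, ∏ m : Fin M, l m t) + ∫ t in (1:ℝ)..L, ∏ m : Fin M, l m t :=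
    (intervalIntegral.integral_add_adjacent_intervals (hint 0 1) (hint 1 L)).symm
  rw [ge_iff_le, hsplit]
  have hCpos : (0:ℝ) < K ^ M / s + 1 := by positivity
  rw [div_mul_eq_mul_div, div_le_iff₀ hCpos]
  nlinarith [hI1nn, key]
end

section
/- Let a < b be real numbers, let λ ∈ (0,1), and suppose that for each m = 1,…,M the function l_m is either of the form l_m(t) = d_m − t with d_m ≥ b or of the form l_m(t) = t − c_m with c_m ≤ a. Then ∫_{(1−λ)a + λ b}^{b} ∏_{m=1}^M l_m(t) dt ≥ C(M,λ) ∫_a^b ∏_{m=1}^M l_m(t) dt for a constant C(M,λ) > 0 depending only on M and λ. -/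
open MeasureTheory

/-- single-variable case of the linear-factors lemma: for factors of the
form `d - t` with `d ≥ b` or `t - c` with `c ≤ a`, the integral of the product over
`[(1-λ)a + λb, b]` dominates a constant `C(M,λ)` times the integral over `[a,b]`. -/
theorem stmt1 (M : ℕ) (lam : ℝ) (hlam0 : 0 < lam) (hlam1 : lam < 1) :
    ∃ C : ℝ, 0 < C ∧
      ∀ (a b : ℝ), a < b →
        ∀ l : Fin M → ℝ → ℝ,
          (∀ m : Fin M,
            (∃ d : ℝ, b ≤ d ∧ ∀ t : ℝ, l m t = d - t) ∨
            (∃ c : ℝ, c ≤ a ∧ ∀ t : ℝ, l m t = t - c)) →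
          (∫ t in ((1 - lam) * a + lam * b)..b, ∏ m : Fin M, l m t)
            ≥ C * ∫ t in a..b, ∏ m : Fin M, l m t := by
  refine ⟨(1 - lam) ^ (M + 1), pow_pos (by linarith) _, ?_⟩
  intro a b hab l hl
  have hc1pos : (0:ℝ) < 1 - lam := by linarith
  have hlc : ∀ m : Fin M, Continuous (l m) := by
    intro m
    rcases hl m with ⟨d, _, hd⟩ | ⟨c, _, hc⟩
    · have : l m = fun t => d - t := funext hd
      rw [this]; continuity
    · have : l m = fun t => t - c := funext hc
      rw [this]; continuity
  have hcont : Continuous fun t => ∏ m : Fin M, l m t :=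
    continuous_finset_prod _ fun m _ => hlc m
  have key : ∫ s in a..b, (∏ m : Fin M, l m ((1 - lam) * s + lam * b))
      = (1 - lam)⁻¹ • ∫ t in ((1 - lam) * a + lam * b)..((1 - lam) * b + lam * b),
          ∏ m : Fin M, l m t :=
    intervalIntegral.integral_comp_mul_add (fun t => ∏ m : Fin M, l m t) (ne_of_gt hc1pos) (lam * b)
  have hend : (1 - lam) * b + lam * b = b := by ring
  rw [hend] at key
  have key2 : (∫ t in ((1 - lam) * a + lam * b)..b, ∏ m : Fin M, l m t)
      = (1 - lam) * ∫ s in a..b, (∏ m : Fin M, l m ((1 - lam) * s + lam * b)) := by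
    rw [key, smul_eq_mul]
    field_simp
  have hpt : ∀ s ∈ Set.Icc a b,
      (∏ m : Fin M, (1 - lam) * l m s) ≤ ∏ m : Fin M, l m ((1 - lam) * s + lam * b) := by
    intro s hs
    apply Finset.prod_le_prod
    · intro m _
      rcases hl m with ⟨d, hd, hfd⟩ | ⟨c, hc, hfc⟩
      · rw [hfd]; nlinarith [hs.2]
      · rw [hfc]; nlinarith [hs.1]
    · intro m _
      rcases hl m with ⟨d, hd, hfd⟩ | ⟨c, hc, hfc⟩
      · rw [hfd, hfd]; nlinarith [hs.2]
      · rw [hfc, hfc]; nlinarith [hs.1]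
  have int1 : IntervalIntegrable (fun s => ∏ m : Fin M, (1 - lam) * l m s) volume a b := by
    apply Continuous.intervalIntegrable
    exact continuous_finset_prod _ fun m _ => continuous_const.mul (hlc m)
  have int2 : IntervalIntegrable (fun s => ∏ m : Fin M, l m ((1 - lam) * s + lam * b))
      volume a b := by
    apply Continuous.intervalIntegrable
    exact continuous_finset_prod _ fun m _ => (hlc m).comp ((continuous_const.mul continuous_id).add continuous_const)
  have hmono : (∫ s in a..b, ∏ m : Fin M, (1 - lam) * l m s)
      ≤ ∫ s in a..b, ∏ m : Fin M, l m ((1 - lam) * s + lam * b) :=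
    intervalIntegral.integral_mono_on hab.le int1 int2 hpt
  have hprod : (fun s => ∏ m : Fin M, (1 - lam) * l m s)
      = fun s => (1 - lam) ^ M * ∏ m : Fin M, l m s := by
    funext s
    rw [Finset.prod_mul_distrib, Finset.prod_const, Finset.card_univ, Fintype.card_fin]
  rw [hprod] at hmono
  rw [intervalIntegral.integral_const_mul] at hmono
  rw [key2, ge_iff_le]
  calc (1 - lam) ^ (M + 1) * ∫ t in a..b, ∏ m : Fin M, l m t
      = (1 - lam) * ((1 - lam) ^ M * ∫ t in a..b, ∏ m : Fin M, l m t) := by ring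
    _ ≤ (1 - lam) * ∫ s in a..b, (∏ m : Fin M, l m ((1 - lam) * s + lam * b)) :=
        mul_le_mul_of_nonneg_left hmono hc1pos.le
end

section
/- For n ≥ 2 and real numbers s_1 ≤ s_2 ≤ … ≤ s_n, the Vandermonde determinant satisfies the integration identity V_n(s_1,…,s_n) = (n−1)! ∫_{s_1}^{s_2} ∫_{s_2}^{s_3} … ∫_{s_{n−1}}^{s_n} V_{n−1}(σ_1,…,σ_{n−1}) dσ_{n−1} … dσ_1. -/
open MeasureTheory

/-- The Vandermonde product `V_n(s) = ∏_{i<j} (s_j - s_i)`. -/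
noncomputable def vand (n : ℕ) (s : Fin n → ℝ) : ℝ :=
  ∏ p ∈ Finset.univ.filter (fun p : Fin n × Fin n => p.1 < p.2), (s p.2 - s p.1)

/-- The iterated integral `∫_{s_0}^{s_1} ⋯ ∫_{s_{k-1}}^{s_k} f(σ) dσ_{k-1} ⋯ dσ_0`,
where the `j`-th integration variable runs from `s j` to `s (j+1)`. -/
noncomputable def iterInt : (k : ℕ) → ((Fin k → ℝ) → ℝ) → (Fin (k + 1) → ℝ) → ℝ
  | 0, f, _ => f (fun i => i.elim0)
  | (k + 1), f, s =>
      ∫ x in (s 0)..(s 1), iterInt k (fun u => f (Fin.cons x u)) (fun i => s i.succ)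

/-! The Vandermonde determinant `V_n(σ) = det (σ_j ^ i)` is a signed sum of products of functions
of one variable each, so its iterated integral is the determinant of the one-variable integrals
`∫_{s_j}^{s_{j+1}} x ^ i dx = (s_{j+1} ^ (i+1) - s_j ^ (i+1)) / (i+1)`. Pulling out the factors
`1/(i+1)` leaves `1/(n-1)!` times the determinant of the differences
`s_{j+1} ^ (i+1) - s_j ^ (i+1)`, and subtracting each row of the Vandermonde matrix of `s` from the
next one shows that this determinant is `V_n(s)`. -/

lemma vand_eq_det_vandermonde (n : ℕ) (s : Fin n → ℝ) :
    vand n s = (Matrix.vandermonde s).det := by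
  rw [Matrix.det_vandermonde, vand, Finset.prod_filter, Fintype.prod_prod_type]
  refine Finset.prod_congr rfl fun i _ => ?_
  rw [← Finset.prod_filter]
  exact Finset.prod_congr (by ext j; simp) fun _ _ => rfl

lemma vand_eq_det_pow (n : ℕ) (s : Fin n → ℝ) :
    vand n s = (Matrix.of fun i j : Fin n => s j ^ (i : ℕ)).det := by
  rw [vand_eq_det_vandermonde, ← Matrix.det_transpose]
  rfl

lemma vand_succ_eq_det_sub_pow (m : ℕ) (s : Fin (m + 2) → ℝ) :
    vand (m + 2) s = (Matrix.of fun i j : Fin (m + 1) =>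
      s j.succ ^ ((i : ℕ) + 1) - s j.castSucc ^ ((i : ℕ) + 1)).det := by
  set N : Matrix (Fin (m + 2)) (Fin (m + 2)) ℝ := Matrix.of fun i j =>
    Fin.cases (s 0 ^ (j : ℕ)) (fun i' => s i'.succ ^ (j : ℕ) - s i'.castSucc ^ (j : ℕ)) i
    with hN
  have h_rows : (Matrix.vandermonde s).det = N.det :=
    Matrix.det_eq_of_forall_row_eq_smul_add_pred (fun _ => 1) (fun _ => rfl) fun i j => by
      simp [hN, Matrix.vandermonde]
  have h_corner : N 0 0 = 1 := by simp [hN]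
  have h_col : ∀ i : Fin (m + 1), N i.succ 0 = 0 := fun i => by simp [hN]
  have h_minor : N.submatrix (Fin.succAbove 0) Fin.succ =
      Matrix.transpose (Matrix.of fun i j : Fin (m + 1) =>
        s j.succ ^ ((i : ℕ) + 1) - s j.castSucc ^ ((i : ℕ) + 1)) := by
    ext i j
    simp [hN]
  rw [vand_eq_det_vandermonde, h_rows, Matrix.det_succ_column_zero, Fin.sum_univ_succ]
  simp only [h_col, h_corner, h_minor, Matrix.det_transpose, mul_zero, zero_mul,
    Finset.sum_const_zero, add_zero, Fin.val_zero, pow_zero, one_mul]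

lemma iterInt_sum_mul_prod {ι : Type*} (T : Finset ι) (k : ℕ) (c : ι → ℝ)
    (f : ι → Fin k → ℝ → ℝ) (hf : ∀ τ j, Continuous (f τ j))
    (s : Fin (k + 1) → ℝ) :
    iterInt k (fun σ => ∑ τ ∈ T, c τ * ∏ j, f τ j (σ j)) s =
      ∑ τ ∈ T, c τ * ∏ j, ∫ x in s j.castSucc..s j.succ, f τ j x := by
  induction k generalizing c with
  | zero => simp [iterInt]
  | succ k ih =>
    have h_inner : ∀ x, iterInt k (fun u => ∑ τ ∈ T, c τ * ∏ j, f τ j (Fin.cons x u j))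
        (fun i => s i.succ) = ∑ τ ∈ T, c τ * f τ 0 x *
          ∏ j : Fin k, ∫ y in s j.succ.castSucc..s j.succ.succ, f τ j.succ y := fun x => by
      simp only [Fin.prod_univ_succ, Fin.cons_zero, Fin.cons_succ, ← mul_assoc]
      exact ih (fun τ => c τ * f τ 0 x) (fun τ j => f τ j.succ) (fun τ j => hf τ j.succ) _
    rw [iterInt]
    simp_rw [h_inner]
    rw [intervalIntegral.integral_finsetSum fun τ _ =>
      (((hf τ 0).const_mul _).mul_const _).intervalIntegrable _ _]
    refine Finset.sum_congr rfl fun τ _ => ?_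
    rw [intervalIntegral.integral_mul_const, intervalIntegral.integral_const_mul,
      Fin.prod_univ_succ]
    simp only [Fin.castSucc_zero, Fin.succ_zero_eq_one, mul_assoc]

lemma iterInt_det {n : ℕ} (f : Fin n → ℝ → ℝ) (hf : ∀ i, Continuous (f i))
    (s : Fin (n + 1) → ℝ) :
    iterInt n (fun σ => (Matrix.of fun i j => f i (σ j)).det) s =
      (Matrix.of fun i j => ∫ x in s j.castSucc..s j.succ, f i x).det := by
  simp only [Matrix.det_apply, Units.smul_def, zsmul_eq_mul, Matrix.of_apply]
  exact iterInt_sum_mul_prod _ n _ (fun (τ : Equiv.Perm (Fin n)) j => f (τ j))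
    (fun τ j => hf (τ j)) s

theorem stmt2_general (m : ℕ) (s : Fin (m + 2) → ℝ) :
    vand (m + 2) s = (Nat.factorial (m + 1)) * iterInt (m + 1) (vand (m + 1)) s := by
  have h_iter : iterInt (m + 1) (vand (m + 1)) s = (Matrix.of fun i j : Fin (m + 1) =>
      (s j.succ ^ ((i : ℕ) + 1) - s j.castSucc ^ ((i : ℕ) + 1)) / ((i : ℕ) + 1)).det := by
    rw [show vand (m + 1) = _ from funext (vand_eq_det_pow (m + 1)),
      iterInt_det (fun i x => x ^ (i : ℕ)) (fun i => continuous_pow _)]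
    simp only [integral_pow]
  have h_fact : ((m + 1).factorial : ℝ) = ∏ i : Fin (m + 1), (((i : ℕ) : ℝ) + 1) := by
    rw [Fin.prod_univ_eq_prod_range (fun i => (i : ℝ) + 1),
      ← Finset.prod_range_add_one_eq_factorial]
    push_cast; rfl
  rw [vand_succ_eq_det_sub_pow, h_iter, h_fact, ← Matrix.det_mul_column]
  congr 1
  ext i j
  simp only [Matrix.of_apply]
  field_simp

/-- for `n ≥ 2` and `s_1 ≤ … ≤ s_n`,
`V_n(s) = (n-1)! ∫_{s_1}^{s_2} ⋯ ∫_{s_{n-1}}^{s_n} V_{n-1}(σ) dσ`. -/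
theorem stmt2 (m : ℕ) (s : Fin (m + 2) → ℝ) (hs : Monotone s) :
    vand (m + 2) s = (Nat.factorial (m + 1)) * iterInt (m + 1) (vand (m + 1)) s :=
  stmt2_general m s
end

section
/- Let d ≥ 2 and let φ be a C^d function on an interval containing s_1 ≤ s_2 ≤ … ≤ s_d. Let 𝒥_d(s_1,…,s_d; φ) denote the determinant of the d×d matrix whose j-th column is (1, s_j, s_j²/2!, …, s_j^{d−2}/(d−2)!, φ′(s_j))^T. Then ∂_{s_1} ⋯ ∂_{s_{d−1}} 𝒥_d(s_1,…,s_d; φ) = (−1)^{d+1} 𝒥_{d−1}(s_1,…,s_{d−1}; φ′). -/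
open MeasureTheory

/-- `𝒥_d(s;φ)`: determinant of the `d×d` matrix whose `j`-th column is
`(1, s_j, s_j²/2!, …, s_j^{d-2}/(d-2)!, φ'(s_j))ᵀ`. -/
noncomputable def Jdet (d : ℕ) (φ : ℝ → ℝ) (s : Fin d → ℝ) : ℝ :=
  Matrix.det (Matrix.of fun i j : Fin d =>
    if (i : ℕ) + 1 < d then (s j) ^ (i : ℕ) / (Nat.factorial i) else deriv φ (s j))

/-- Partial derivative in the `i`-th coordinate. -/
noncomputable def pderivAt {d : ℕ} (i : Fin d) (F : (Fin d → ℝ) → ℝ) :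
    (Fin d → ℝ) → ℝ :=
  fun s => deriv (fun x => F (Function.update s i x)) (s i)

/-
The determinant is linear in each column, and the `j`-th column of `𝒥_d` depends on `s_j` alone,
so `∂_{s_1} ⋯ ∂_{s_{d-1}}` just replaces the first `d - 1` columns by their derivatives.
Differentiation kills the constant entry `1` of those columns and shifts `s^i/i!` down to
`s^{i-1}/(i-1)!`, so the first row becomes `(0, …, 0, 1)`; the Laplace expansion along it leaves
`(-1)^{d+1}` times a minor which is exactly the matrix of `𝒥_{d-1}(·; φ')`.
-/

open Topology

theorem Matrix.hasDerivAt_det_updateCol {𝕜 n : Type*} [NontriviallyNormedField 𝕜] [Fintype n]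
    [DecidableEq n] (M : Matrix n n 𝕜) (j : n) {c : 𝕜 → n → 𝕜} {c' : n → 𝕜} {x : 𝕜}
    (hc : HasDerivAt c c' x) :
    HasDerivAt (fun y => (M.updateCol j (c y)).det) (M.updateCol j c').det x := by
  have hexpand : ∀ v : n → 𝕜, (M.updateCol j v).det = ∑ i, M.adjugate j i * v i := fun v => by
    rw [← cramer_apply, cramer_eq_adjugate_mulVec]; rfl
  simp only [hexpand]
  exact HasDerivAt.fun_sum fun i _ => (hasDerivAt_pi.1 hc i).const_mul _

theorem Matrix.det_succ_of_row_zero_eq_zero {R : Type*} [CommRing R] {n : ℕ}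
    (A : Matrix (Fin (n + 1)) (Fin (n + 1)) R) (k : Fin (n + 1)) (h : ∀ j ≠ k, A 0 j = 0) :
    A.det = (-1) ^ (k : ℕ) * A 0 k * (A.submatrix Fin.succ k.succAbove).det := by
  rw [det_succ_row_zero, Finset.sum_eq_single k (fun j _ hj => by rw [h j hj]; ring) (by simp)]

theorem foldr_pderivAt_det_of_columns {d : ℕ} {U : Set ℝ} (hU : IsOpen U)
    {f g : Fin d → ℝ → Fin d → ℝ} (hfg : ∀ j, ∀ x ∈ U, HasDerivAt (f j) (g j x) x)
    {l : List (Fin d)} (hl : l.Nodup) {s : Fin d → ℝ} (hs : ∀ j, s j ∈ U) :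
    l.foldr pderivAt (fun t => (Matrix.of fun i j => f j (t j) i).det) s
      = (Matrix.of fun i j => (if j ∈ l then g j else f j) (s j) i).det := by
  induction l generalizing s with
  | nil => simp
  | cons a l ih =>
    obtain ⟨hal, hl⟩ := List.nodup_cons.1 hl
    set M := Matrix.of fun i j => (if j ∈ l then g j else f j) (s j) i
    have hlocal : (fun x => (M.updateCol a (f a x)).det) =ᶠ[𝓝 (s a)]
        fun x => l.foldr pderivAt (fun t => (Matrix.of fun i j => f j (t j) i).det)
          (Function.update s a x) := by
      filter_upwards [hU.mem_nhds (hs a)] with x hx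
      rw [ih hl fun j => by rcases eq_or_ne j a with rfl | hj <;> simp [*]]
      congr 1
      ext i j
      rcases eq_or_ne j a with rfl | hj <;> simp [M, *]
    refine ((M.hasDerivAt_det_updateCol a (hfg a (s a) (hs a))).congr_of_eventuallyEq
      hlocal.symm).deriv.trans ?_
    congr 1
    ext i j
    rcases eq_or_ne j a with rfl | hj <;> simp [M, *]

theorem hasDerivAt_pow_succ_div_factorial (n : ℕ) (x : ℝ) :
    HasDerivAt (fun y : ℝ => y ^ (n + 1) / (n + 1).factorial) (x ^ n / n.factorial) x := by
  refine ((hasDerivAt_pow (n + 1) x).div_const _).congr_deriv ?_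
  push_cast [Nat.factorial_succ, Nat.add_sub_cancel]
  field_simp

section JdetColumn

variable (d : ℕ) (φ : ℝ → ℝ)

noncomputable def jdetColumn (x : ℝ) : Fin d → ℝ :=
  fun i => if (i : ℕ) + 1 < d then x ^ (i : ℕ) / (i : ℕ).factorial else deriv φ x

noncomputable def jdetColumnDeriv (x : ℝ) : Fin d → ℝ :=
  fun i =>
    if (i : ℕ) + 1 < d then
      if (i : ℕ) = 0 then 0 else x ^ ((i : ℕ) - 1) / ((i : ℕ) - 1).factorial
    else deriv (deriv φ) x

theorem Jdet_eq_det_jdetColumn (s : Fin d → ℝ) :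
    Jdet d φ s = (Matrix.of fun i j => jdetColumn d φ (s j) i).det :=
  rfl

variable {d φ}

theorem hasDerivAt_jdetColumn {x : ℝ} (hφ : DifferentiableAt ℝ (deriv φ) x) :
    HasDerivAt (jdetColumn d φ) (jdetColumnDeriv d φ x) x := by
  refine hasDerivAt_pi.2 fun i => ?_
  unfold jdetColumn jdetColumnDeriv
  split_ifs with hi hi0
  · simpa [hi0] using hasDerivAt_const x (1 : ℝ)
  · obtain ⟨n, hn⟩ := Nat.exists_eq_succ_of_ne_zero hi0
    simpa [hn] using hasDerivAt_pow_succ_div_factorial n x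
  · exact hφ.hasDerivAt

theorem jdetColumn_zero (x : ℝ) : jdetColumn (d + 2) φ x 0 = 1 := by
  simp [jdetColumn]

theorem jdetColumnDeriv_zero (x : ℝ) : jdetColumnDeriv (d + 2) φ x 0 = 0 := by
  simp [jdetColumnDeriv]

theorem jdetColumnDeriv_succ (x : ℝ) (i : Fin (d + 1)) :
    jdetColumnDeriv (d + 2) φ x i.succ = jdetColumn (d + 1) (deriv φ) x i := by
  simp [jdetColumnDeriv, jdetColumn]

end JdetColumn

theorem stmt3_general (m : ℕ) (φ : ℝ → ℝ) (A B : ℝ)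
    (hφ : ContDiffOn ℝ (m + 2) φ (Set.Ioo A B))
    (s : Fin (m + 2) → ℝ) (hmem : ∀ j, s j ∈ Set.Ioo A B) :
    (((List.finRange (m + 1)).map Fin.castSucc).foldr pderivAt (Jdet (m + 2) φ)) s
      = (-1 : ℝ) ^ (m + 3) * Jdet (m + 1) (deriv φ) (fun i => s i.castSucc) := by
  have hφ' : ∀ x ∈ Set.Ioo A B, DifferentiableAt ℝ (deriv φ) x := fun x hx =>
    ((hφ.deriv_of_isOpen isOpen_Ioo (by norm_cast; omega)).differentiableOn one_ne_zero)
      |>.differentiableAt (isOpen_Ioo.mem_nhds hx)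
  have hmem_iff (j : Fin (m + 2)) :
      j ∈ (List.finRange (m + 1)).map Fin.castSucc ↔ j ≠ Fin.last _ := by
    simpa using Fin.exists_castSucc_eq
  rw [funext (Jdet_eq_det_jdetColumn (m + 2) φ), foldr_pderivAt_det_of_columns isOpen_Ioo
    (fun _ x hx => hasDerivAt_jdetColumn (hφ' x hx))
    ((List.nodup_finRange _).map (Fin.castSucc_injective _)) hmem,
    Matrix.det_succ_of_row_zero_eq_zero _ (Fin.last _) fun j hj => by
      simp [hmem_iff, hj, jdetColumnDeriv_zero]]
  rw [Fin.val_last, Fin.succAbove_last, Matrix.of_apply, if_neg (by simp [hmem_iff]),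
    jdetColumn_zero, Jdet_eq_det_jdetColumn, mul_one, pow_add _ (m + 1) 2, neg_one_sq, mul_one]
  congr 2
  ext i j
  simp [hmem_iff, (Fin.castSucc_lt_last j).ne, jdetColumnDeriv_succ]

/-- for `d = m+2 ≥ 2` and `φ` of class `C^d` on an interval containing
`s_1 ≤ … ≤ s_d`, one has
`∂_{s_1} ⋯ ∂_{s_{d-1}} 𝒥_d(s;φ) = (-1)^{d+1} 𝒥_{d-1}(s_1,…,s_{d-1};φ')`. -/
theorem stmt3 (m : ℕ) (φ : ℝ → ℝ) (A B : ℝ)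
    (hφ : ContDiffOn ℝ (m + 2) φ (Set.Ioo A B))
    (s : Fin (m + 2) → ℝ) (hs : Monotone s) (hmem : ∀ j, s j ∈ Set.Ioo A B) :
    (((List.finRange (m + 1)).map Fin.castSucc).foldr pderivAt (Jdet (m + 2) φ)) s
      = (-1 : ℝ) ^ (m + 3) * Jdet (m + 1) (deriv φ) (fun i => s i.castSucc) :=
  stmt3_general m φ A B hφ s hmem
end

section
/- Let n ≥ 2 and let 0 ≤ a_1 ≤ … ≤ a_n. Let 𝒰_{n−1}(a) = {x ∈ (ℝ_+)^{n−1} : (1/(n−1)) ∑_{i=1}^{n−1} x_i ≥ (1/n) ∑_{k=1}^n a_k}. Then there is a constant C(n) > 0, depending only on n, such that ∫_{a_1}^{a_2} … ∫_{a_{n−1}}^{a_n} V_{n−1}(x_1,…,x_{n−1}) χ_{𝒰_{n−1}(a)}(x) dx_{n−1} … dx_1 ≥ C(n) V_n(a_1,…,a_n). -/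
open MeasureTheory

/-!
Shrink the box `∏ⱼ [aⱼ, aⱼ₊₁]` of integration to the subbox `∏ⱼ [aⱼ₊₁ - 2wⱼ, aⱼ₊₁ - wⱼ]`, where
`3wⱼ = min (aⱼ₊₁ - aⱼ) (S / (n (n - 1)))` and `S = ∑ₖ (aₖ - a₁)`. Each coordinate sits near the
right end of its interval and the total shift `2 ∑ wⱼ ≤ S / n` is small, so the whole subbox
lies in `𝒰_{n-1}(a)`. Since `wⱼ` is at most a third of the gap `aⱼ₊₁ - aⱼ`, on the subbox
`xⱼ - xᵢ ≥ (aⱼ₊₁ - aᵢ₊₁) / 3 + wᵢ` for `i < j`, and the integral is at least the volume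
`∏ wⱼ` times the product of these lower bounds. Finally
`V_n(a) = ∏ⱼ (aⱼ₊₁ - aⱼ) · ∏_{i<j} (aⱼ₊₁ - aᵢ)`, and each factor is at most `3n²` times the
corresponding factor `wⱼ`, resp. `(aⱼ₊₁ - aᵢ₊₁) / 3 + wᵢ`, of that lower bound.
-/

open Finset Set Interval

theorem Fin.cons_mem_Icc {n : ℕ} {α : Type*} [Preorder α] {p q : Fin (n + 1) → α} {x : α}
    {u : Fin n → α} : (Fin.cons x u : Fin (n + 1) → α) ∈ Icc p q ↔
      x ∈ Icc (p 0) (q 0) ∧ u ∈ Icc (Fin.tail p) (Fin.tail q) := by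
  simp only [Set.mem_Icc, Fin.le_cons, Fin.cons_le]
  tauto

theorem Fin.cons_mem_Icc_init_tail {n : ℕ} {α : Type*} [Preorder α] {s : Fin (n + 2) → α}
    {x : α} {u : Fin n → α} :
    (Fin.cons x u : Fin (n + 1) → α) ∈ Icc (Fin.init s) (Fin.tail s) ↔
      x ∈ Icc (s 0) (s 1) ∧ u ∈ Icc (Fin.init (Fin.tail s)) (Fin.tail (Fin.tail s)) := by
  rw [Fin.cons_mem_Icc, Fin.tail_init_eq_init_tail]
  rfl

theorem monotone_of_mem_Icc_init_tail {n : ℕ} {α : Type*} [Preorder α] {s : Fin (n + 2) → α}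
    (hs : Monotone s) {x : Fin (n + 1) → α} (hx : x ∈ Icc (Fin.init s) (Fin.tail s)) :
    Monotone x :=
  Fin.monotone_iff_le_succ.2 fun i => (hx.2 i.castSucc).trans <|
    (hs (by simp)).trans (hx.1 i.succ)

section IterInt

variable {k : ℕ}

theorem iterInt_succ (f : (Fin (k + 1) → ℝ) → ℝ) (s : Fin (k + 2) → ℝ) :
    iterInt (k + 1) f s =
      ∫ x in s 0..s 1, iterInt k (fun u => f (Fin.cons x u)) (Fin.tail s) := rfl

theorem measurable_iterInt {α : Type*} [MeasurableSpace α] {g : α → (Fin k → ℝ) → ℝ}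
    (hg : Measurable (Function.uncurry g)) (s : Fin (k + 1) → ℝ) :
    Measurable fun a => iterInt k (g a) s := by
  induction k generalizing α with
  | zero => exact hg.comp (measurable_id.prodMk measurable_const)
  | succ k ih =>
    have hcons : Measurable fun p : (α × ℝ) × (Fin k → ℝ) =>
        (p.1.1, (Fin.cons p.1.2 p.2 : Fin (k + 1) → ℝ)) :=
      measurable_fst.fst.prodMk <| (continuous_fst.finCons continuous_snd).measurable.comp
        (measurable_fst.snd.prodMk measurable_snd)
    have hF := ih (g := fun (b : α × ℝ) u => g b.1 (Fin.cons b.2 u)) (hg.comp hcons) (Fin.tail s)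
    simp_rw [iterInt_succ, intervalIntegral.intervalIntegral_eq_integral_uIoc]
    exact (hF.stronglyMeasurable.integral_prod_right'
      (ν := volume.restrict (Ι (s 0) (s 1)))).measurable.const_smul (M := ℝ) _

theorem iterInt_nonneg {f : (Fin k → ℝ) → ℝ} {s : Fin (k + 1) → ℝ} (hs : Monotone s)
    (hf : ∀ x ∈ Icc (Fin.init s) (Fin.tail s), 0 ≤ f x) : 0 ≤ iterInt k f s := by
  induction k with
  | zero => exact hf _ ⟨fun i => i.elim0, fun i => i.elim0⟩
  | succ k ih =>
    refine intervalIntegral.integral_nonneg (hs zero_le_one) fun x hx => ?_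
    exact ih (hs.comp Fin.strictMono_succ.monotone) fun u hu =>
      hf _ (Fin.cons_mem_Icc_init_tail.2 ⟨hx, hu⟩)

theorem abs_iterInt_le {f : (Fin k → ℝ) → ℝ} {s : Fin (k + 1) → ℝ} {B : ℝ} (hs : Monotone s)
    (hf : ∀ x ∈ Icc (Fin.init s) (Fin.tail s), |f x| ≤ B) :
    |iterInt k f s| ≤ B * ∏ j : Fin k, (s j.succ - s j.castSucc) := by
  induction k with
  | zero => simpa [iterInt] using hf _ ⟨fun i => i.elim0, fun i => i.elim0⟩
  | succ k ih =>
    have h01 : s 0 ≤ s 1 := hs zero_le_one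
    have hF := intervalIntegral.norm_integral_le_of_norm_le_const (a := s 0) (b := s 1)
      (f := fun x => iterInt k (fun u => f (Fin.cons x u)) (Fin.tail s)) fun x hx => by
        rw [uIoc_of_le h01] at hx
        exact ih (hs.comp Fin.strictMono_succ.monotone) fun u hu =>
          hf _ (Fin.cons_mem_Icc_init_tail.2 ⟨Ioc_subset_Icc_self hx, hu⟩)
    rw [Real.norm_eq_abs, abs_of_nonneg (sub_nonneg.2 h01)] at hF
    rw [iterInt_succ, Fin.prod_univ_succ]
    convert hF using 1
    simp only [Fin.tail, Fin.succ_zero_eq_one, Fin.castSucc_zero, Fin.castSucc_succ]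
    ring

theorem intervalIntegrable_iterInt_cons {f : (Fin (k + 1) → ℝ) → ℝ} {s : Fin (k + 2) → ℝ}
    {B : ℝ} (hf : Measurable f) (hs : Monotone s)
    (hfB : ∀ x ∈ Icc (Fin.init s) (Fin.tail s), |f x| ≤ B) :
    IntervalIntegrable (fun x => iterInt k (fun u => f (Fin.cons x u)) (Fin.tail s)) volume
      (s 0) (s 1) := by
  have hF : Measurable fun x => iterInt k (fun u => f (Fin.cons x u)) (Fin.tail s) :=
    measurable_iterInt (g := fun x u => f (Fin.cons x u))
      (hf.comp (continuous_fst.finCons continuous_snd).measurable) _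
  refine (intervalIntegrable_const (c := B * ∏ j : Fin k, (s j.succ.succ - s j.castSucc.succ))
    ).mono_fun' hF.aestronglyMeasurable
      (ae_restrict_of_forall_mem measurableSet_uIoc fun x hx => ?_)
  rw [uIoc_of_le (hs zero_le_one)] at hx
  exact abs_iterInt_le (hs.comp Fin.strictMono_succ.monotone) fun u hu =>
    hfB _ (Fin.cons_mem_Icc_init_tail.2 ⟨Ioc_subset_Icc_self hx, hu⟩)

theorem mul_prod_le_iterInt {f : (Fin k → ℝ) → ℝ} {s : Fin (k + 1) → ℝ} {p q : Fin k → ℝ}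
    {K B : ℝ} (hf : Measurable f) (hsp : Fin.init s ≤ p) (hpq : p ≤ q) (hqs : q ≤ Fin.tail s)
    (hf0 : ∀ x ∈ Icc (Fin.init s) (Fin.tail s), 0 ≤ f x)
    (hfB : ∀ x ∈ Icc (Fin.init s) (Fin.tail s), |f x| ≤ B) (hKf : ∀ x ∈ Icc p q, K ≤ f x) :
    K * ∏ j, (q j - p j) ≤ iterInt k f s := by
  induction k with
  | zero => simpa [iterInt] using hKf _ ⟨fun i => i.elim0, fun i => i.elim0⟩
  | succ k ih =>
    have hs : Monotone s :=
      Fin.monotone_iff_le_succ.2 fun j => (hsp j).trans ((hpq j).trans (hqs j))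
    set F : ℝ → ℝ := fun x => iterInt k (fun u => f (Fin.cons x u)) (Fin.tail s)
    have hs0p : s 0 ≤ p 0 := hsp 0
    have hpq0 : p 0 ≤ q 0 := hpq 0
    have hqs1 : q 0 ≤ s 1 := hqs 0
    have hF_int : IntervalIntegrable F volume (s 0) (s 1) :=
      intervalIntegrable_iterInt_cons hf hs hfB
    have hF0 : 0 ≤ᵐ[volume.restrict (Ioc (s 0) (s 1))] F :=
      ae_restrict_of_forall_mem measurableSet_Ioc fun x hx =>
        iterInt_nonneg (hs.comp Fin.strictMono_succ.monotone) fun u hu =>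
          hf0 _ (Fin.cons_mem_Icc_init_tail.2 ⟨Ioc_subset_Icc_self hx, hu⟩)
    have hKF : ∀ x ∈ Icc (p 0) (q 0), K * ∏ j, (Fin.tail q j - Fin.tail p j) ≤ F x :=
      fun x hx => by
        have hx' : x ∈ Icc (s 0) (s 1) := Icc_subset_Icc hs0p hqs1 hx
        exact ih (hf.comp (continuous_const.finCons continuous_id).measurable)
          (fun j => hsp j.succ) (fun j => hpq j.succ) (fun j => hqs j.succ)
          (fun u hu => hf0 _ (Fin.cons_mem_Icc_init_tail.2 ⟨hx', hu⟩))
          (fun u hu => hfB _ (Fin.cons_mem_Icc_init_tail.2 ⟨hx', hu⟩))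
          (fun u hu => hKf _ (Fin.cons_mem_Icc.2 ⟨hx, hu⟩))
    calc K * ∏ j, (q j - p j)
        = ∫ _ in p 0..q 0, K * ∏ j, (Fin.tail q j - Fin.tail p j) := by
          rw [intervalIntegral.integral_const, Fin.prod_univ_succ, smul_eq_mul]
          simp only [Fin.tail]
          ring
      _ ≤ ∫ x in p 0..q 0, F x :=
          intervalIntegral.integral_mono_on hpq0 intervalIntegrable_const
            (hF_int.mono_set (uIcc_subset_uIcc (mem_uIcc_of_le hs0p (hpq0.trans hqs1))
              (mem_uIcc_of_le (hs0p.trans hpq0) hqs1))) hKF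
      _ ≤ iterInt (k + 1) f s :=
          intervalIntegral.integral_mono_interval hs0p hpq0 hqs1 hF0 hF_int

end IterInt

abbrev ltPairs (n : ℕ) : Finset (Fin n × Fin n) := univ.filter fun p => p.1 < p.2

theorem prod_ltPairs_succ {M : Type*} [CommMonoid M] {n : ℕ} (F : Fin (n + 1) → Fin (n + 1) → M) :
    ∏ p ∈ ltPairs (n + 1), F p.1 p.2 =
      (∏ j : Fin n, F j.castSucc j.succ) * ∏ p ∈ ltPairs n, F p.1.castSucc p.2.succ := by
  have hsplit (i j : Fin n) : (if i ≤ j then F i.castSucc j.succ else 1) =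
      (if i = j then F i.castSucc j.succ else 1) * (if i < j then F i.castSucc j.succ else 1) := by
    rcases lt_trichotomy i j with h | rfl | h
    · simp [h, h.ne, h.not_gt]
    · simp
    · simp [h.not_ge, h.not_gt, h.ne']
  simp only [prod_filter, Fintype.prod_prod_type]
  rw [Fin.prod_univ_castSucc]
  simp only [Fin.prod_univ_succ, Fin.castSucc_lt_succ_iff, (Fin.le_last _).not_gt,
    Fin.not_lt_zero, if_false, one_mul, prod_const_one, mul_one, hsplit, prod_mul_distrib,
    prod_ite_eq, Finset.mem_univ, if_true]

section Vandermonde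

variable {n : ℕ}

theorem continuous_vand (n : ℕ) : Continuous (vand n) :=
  continuous_finsetProd _ fun p _ => (continuous_apply p.2).sub (continuous_apply p.1)

theorem vand_nonneg {x : Fin n → ℝ} (hx : Monotone x) : 0 ≤ vand n x :=
  prod_nonneg fun _ hp => sub_nonneg.2 (hx (mem_filter.1 hp).2.le)

theorem prod_sub_le_vand {p q x : Fin n → ℝ} (hqp : ∀ ⦃i j⦄, i < j → q i ≤ p j)
    (hx : x ∈ Icc p q) : ∏ ij ∈ ltPairs n, (p ij.2 - q ij.1) ≤ vand n x :=
  prod_le_prod (fun _ hij => sub_nonneg.2 (hqp (mem_filter.1 hij).2))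
    fun ij _ => sub_le_sub (hx.1 ij.2) (hx.2 ij.1)

end Vandermonde

section Subbox

variable {m : ℕ} {a : Fin (m + 2) → ℝ}

noncomputable def subboxWidth (a : Fin (m + 2) → ℝ) (j : Fin (m + 1)) : ℝ :=
  min (a j.succ - a j.castSucc) ((∑ k, (a k - a 0)) / ((m + 1) * (m + 2))) / 3

noncomputable def subboxLo (a : Fin (m + 2) → ℝ) (j : Fin (m + 1)) : ℝ :=
  a j.succ - 2 * subboxWidth a j

noncomputable def subboxHi (a : Fin (m + 2) → ℝ) (j : Fin (m + 1)) : ℝ :=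
  a j.succ - subboxWidth a j

theorem subboxWidth_nonneg (ha : Monotone a) (j : Fin (m + 1)) : 0 ≤ subboxWidth a j := by
  have hS : 0 ≤ ∑ k, (a k - a 0) := sum_nonneg fun k _ => sub_nonneg.2 (ha (Fin.zero_le k))
  have := sub_nonneg.2 (ha (Fin.castSucc_le_succ j))
  unfold subboxWidth
  positivity

theorem three_mul_subboxWidth_le (j : Fin (m + 1)) :
    3 * subboxWidth a j ≤ a j.succ - a j.castSucc := by
  unfold subboxWidth
  linarith [min_le_left (a j.succ - a j.castSucc) ((∑ k, (a k - a 0)) / ((m + 1) * (m + 2)))]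

theorem sub_le_mul_subboxWidth (ha : Monotone a) (j : Fin (m + 1)) :
    a j.succ - a j.castSucc ≤ 3 * (m + 2) ^ 2 * subboxWidth a j := by
  set g := a j.succ - a j.castSucc
  set S := ∑ k, (a k - a 0)
  set D : ℝ := (m + 1) * (m + 2)
  have hD : 1 ≤ D := by simp only [D]; nlinarith [(m.cast_nonneg : (0 : ℝ) ≤ m)]
  have hg : 0 ≤ g := sub_nonneg.2 (ha (Fin.castSucc_le_succ j))
  have hS : 0 ≤ S := sum_nonneg fun k _ => sub_nonneg.2 (ha (Fin.zero_le k))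
  have hgS : g ≤ S := calc
    g ≤ a j.succ - a 0 := sub_le_sub_left (ha (Fin.zero_le _)) _
    _ ≤ S := single_le_sum (f := fun k => a k - a 0)
      (fun k _ => sub_nonneg.2 (ha (Fin.zero_le k))) (mem_univ _)
  calc g ≤ min (D * g) S := le_min (le_mul_of_one_le_left hg hD) hgS
    _ = D * min g (S / D) := by
      rw [mul_min_of_nonneg _ _ (by positivity), mul_div_cancel₀ _ (by positivity)]
    _ ≤ (m + 2) ^ 2 * min g (S / D) :=
      mul_le_mul_of_nonneg_right (by simp only [D]; nlinarith) (le_min hg (by positivity))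
    _ = 3 * (m + 2) ^ 2 * subboxWidth a j := by rw [subboxWidth]; ring

theorem three_mul_sum_subboxWidth_le :
    3 * (m + 2) * ∑ j, subboxWidth a j ≤ ∑ k, (a k - a 0) := by
  have h (j : Fin (m + 1)) :
      subboxWidth a j ≤ (∑ k, (a k - a 0)) / ((m + 1) * (m + 2)) / 3 :=
    div_le_div_of_nonneg_right (min_le_right _ _) (by norm_num)
  calc 3 * (m + 2) * ∑ j, subboxWidth a j
      ≤ 3 * (m + 2) * ∑ _j : Fin (m + 1), (∑ k, (a k - a 0)) / ((m + 1) * (m + 2)) / 3 := by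
        gcongr with j
        exact h j
    _ = ∑ k, (a k - a 0) := by
        rw [sum_const, card_univ, Fintype.card_fin, nsmul_eq_mul]
        push_cast
        field_simp

theorem init_le_subboxLo (ha : Monotone a) : Fin.init a ≤ subboxLo a := fun j => by
  simp only [Fin.init, subboxLo]
  linarith [three_mul_subboxWidth_le (a := a) j, subboxWidth_nonneg ha j]

theorem subboxLo_le_subboxHi (ha : Monotone a) : subboxLo a ≤ subboxHi a := fun j => by
  simp only [subboxLo, subboxHi]
  linarith [subboxWidth_nonneg ha j]

theorem subboxHi_le_tail (ha : Monotone a) : subboxHi a ≤ Fin.tail a := fun j => by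
  simp only [Fin.tail, subboxHi]
  linarith [subboxWidth_nonneg ha j]

theorem sub_div_three_add_subboxWidth_le (ha : Monotone a) {i j : Fin (m + 1)} (hij : i < j) :
    (a j.succ - a i.succ) / 3 + subboxWidth a i ≤ subboxLo a j - subboxHi a i := by
  have := ha (Fin.succ_le_castSucc_iff.2 hij)
  have := three_mul_subboxWidth_le (a := a) j
  simp only [subboxLo, subboxHi]
  linarith

theorem subboxHi_le_subboxLo (ha : Monotone a) {i j : Fin (m + 1)} (hij : i < j) :
    subboxHi a i ≤ subboxLo a j := by
  have := ha (Fin.succ_le_succ_iff.2 hij.le)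
  linarith [sub_div_three_add_subboxWidth_le ha hij, subboxWidth_nonneg ha i]

theorem sub_le_mul_subboxLo_sub_subboxHi (ha : Monotone a) {i j : Fin (m + 1)} (hij : i < j) :
    a j.succ - a i.castSucc ≤ 3 * (m + 2) ^ 2 * (subboxLo a j - subboxHi a i) := by
  set M : ℝ := 3 * (m + 2) ^ 2
  have hM : 3 ≤ M := by simp only [M]; nlinarith [(m.cast_nonneg : (0 : ℝ) ≤ m)]
  have hij' : 0 ≤ a j.succ - a i.succ := sub_nonneg.2 (ha (Fin.succ_le_succ_iff.2 hij.le))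
  nlinarith [sub_le_mul_subboxWidth ha i, mul_nonneg (sub_nonneg.2 hM) hij',
    mul_le_mul_of_nonneg_left (sub_div_three_add_subboxWidth_le ha hij) (by linarith : 0 ≤ M)]

theorem sum_div_le_sum_div_of_mem_subbox (ha : Monotone a) {x : Fin (m + 1) → ℝ}
    (hx : x ∈ Icc (subboxLo a) (subboxHi a)) :
    (∑ k, a k) / (m + 2) ≤ (∑ i, x i) / (m + 1) := by
  have hlo : ∑ j, (a j.succ - 2 * subboxWidth a j) ≤ ∑ i, x i := sum_le_sum fun j _ => hx.1 j
  have hS : 0 ≤ ∑ k, (a k - a 0) := sum_nonneg fun k _ => sub_nonneg.2 (ha (Fin.zero_le k))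
  have hW := three_mul_sum_subboxWidth_le (a := a)
  rw [sum_sub_distrib, ← mul_sum] at hlo
  rw [sum_sub_distrib, sum_const, card_univ, Fintype.card_fin, nsmul_eq_mul] at hS hW
  rw [div_le_div_iff₀ (by positivity) (by positivity)]
  rw [Fin.sum_univ_succ (f := a)] at hS hW ⊢
  push_cast at hS hW
  nlinarith [mul_le_mul_of_nonneg_right hlo (by positivity : (0 : ℝ) ≤ m + 2)]

theorem pow_card_mul_vand_le (ha : Monotone a) :
    ((3 * ((m : ℝ) + 2) ^ 2)⁻¹) ^ (ltPairs (m + 2)).card * vand (m + 2) a ≤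
      (∏ ij ∈ ltPairs (m + 1), (subboxLo a ij.2 - subboxHi a ij.1)) *
        ∏ j, (subboxHi a j - subboxLo a j) := by
  set c : ℝ := (3 * ((m : ℝ) + 2) ^ 2)⁻¹
  have hc : 0 < 3 * ((m : ℝ) + 2) ^ 2 := by positivity
  have hfac {i j : Fin (m + 2)} (hij : i ≤ j) : 0 ≤ c * (a j - a i) :=
    mul_nonneg (inv_nonneg.2 hc.le) (sub_nonneg.2 (ha hij))
  rw [vand, ← prod_const, ← prod_mul_distrib, prod_ltPairs_succ fun i j => c * (a j - a i),
    mul_comm]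
  refine mul_le_mul (prod_le_prod (fun ij hij => hfac ?_) fun ij hij => ?_)
    (prod_le_prod (fun j _ => hfac (Fin.castSucc_le_succ j)) fun j _ => ?_)
    (prod_nonneg fun j _ => hfac (Fin.castSucc_le_succ j)) (prod_nonneg fun ij hij => ?_)
  · exact (Fin.castSucc_le_succ _).trans (Fin.succ_le_succ_iff.2 (mem_filter.1 hij).2.le)
  · exact (inv_mul_le_iff₀ hc).2 (sub_le_mul_subboxLo_sub_subboxHi ha (mem_filter.1 hij).2)
  · refine (inv_mul_le_iff₀ hc).2 ?_
    simp only [subboxLo, subboxHi]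
    linarith [sub_le_mul_subboxWidth ha j]
  · exact sub_nonneg.2 (subboxHi_le_subboxLo ha (mem_filter.1 hij).2)

end Subbox

section VandOnU

variable {m : ℕ} {a : Fin (m + 2) → ℝ}

-- `V_{n-1}(x) χ_{𝒰_{n-1}(a)}(x)` with `n = m + 2`
noncomputable def vandOnU (a : Fin (m + 2) → ℝ) (x : Fin (m + 1) → ℝ) : ℝ :=
  if (∀ i, 0 ≤ x i) ∧
      (∑ i : Fin (m + 1), x i) / (m + 1) ≥ (∑ k : Fin (m + 2), a k) / (m + 2)
  then vand (m + 1) x else 0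

theorem measurable_vandOnU : Measurable (vandOnU a) := by
  refine Measurable.ite ?_ (continuous_vand _).measurable measurable_const
  measurability

theorem vandOnU_nonneg (ha : Monotone a) {x : Fin (m + 1) → ℝ}
    (hx : x ∈ Icc (Fin.init a) (Fin.tail a)) : 0 ≤ vandOnU a x := by
  unfold vandOnU
  split_ifs
  · exact vand_nonneg (monotone_of_mem_Icc_init_tail ha hx)
  · rfl

theorem abs_vandOnU_le (x : Fin (m + 1) → ℝ) : |vandOnU a x| ≤ |vand (m + 1) x| := by
  unfold vandOnU
  split_ifs
  · rfl
  · simp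

theorem vandOnU_eq_of_mem_subbox (h0 : 0 ≤ a 0) (ha : Monotone a) {x : Fin (m + 1) → ℝ}
    (hx : x ∈ Icc (subboxLo a) (subboxHi a)) : vandOnU a x = vand (m + 1) x := by
  refine if_pos ⟨fun i => ?_, sum_div_le_sum_div_of_mem_subbox ha hx⟩
  exact h0.trans ((ha (Fin.zero_le _)).trans ((init_le_subboxLo ha i).trans (hx.1 i)))

end VandOnU

/-- for `n = m+2 ≥ 2` and `0 ≤ a_1 ≤ … ≤ a_n`, with
`𝒰_{n-1}(a) = {x ∈ ℝ_+^{n-1} : (∑ x_i)/(n-1) ≥ (∑ a_k)/n}`, there is `C(n) > 0` with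
`∫_{a_1}^{a_2} ⋯ ∫_{a_{n-1}}^{a_n} V_{n-1}(x) χ_{𝒰_{n-1}(a)}(x) dx ≥ C(n) V_n(a)`. -/
theorem stmt8 (m : ℕ) :
    ∃ C : ℝ, 0 < C ∧
      ∀ a : Fin (m + 2) → ℝ, 0 ≤ a 0 → Monotone a →
        iterInt (m + 1)
            (fun x =>
              if (∀ i, 0 ≤ x i) ∧
                  (∑ i : Fin (m + 1), x i) / (m + 1) ≥ (∑ k : Fin (m + 2), a k) / (m + 2)
              then vand (m + 1) x else 0) a
          ≥ C * vand (m + 2) a := by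
  refine ⟨((3 * ((m : ℝ) + 2) ^ 2)⁻¹) ^ (ltPairs (m + 2)).card, by positivity,
    fun a h0 ha => ?_⟩
  obtain ⟨B, hB⟩ := isCompact_Icc.exists_bound_of_continuousOn
    (s := Icc (Fin.init a) (Fin.tail a)) (continuous_vand (m + 1)).continuousOn
  have hsubbox : ∀ x ∈ Icc (subboxLo a) (subboxHi a),
      ∏ ij ∈ ltPairs (m + 1), (subboxLo a ij.2 - subboxHi a ij.1) ≤ vandOnU a x :=
    fun x hx => (vandOnU_eq_of_mem_subbox h0 ha hx).symm ▸
      prod_sub_le_vand (fun _ _ => subboxHi_le_subboxLo ha) hx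
  calc _ ≤ _ := pow_card_mul_vand_le ha
    _ ≤ iterInt (m + 1) (vandOnU a) a :=
      mul_prod_le_iterInt measurable_vandOnU (init_le_subboxLo ha) (subboxLo_le_subboxHi ha)
        (subboxHi_le_tail ha) (fun x hx => vandOnU_nonneg ha hx)
        (fun x hx => (abs_vandOnU_le x).trans (hB x hx)) hsubbox
end

section
/- Let g : (0, ∞) → (0, ∞) be nondecreasing and satisfy (∏_{j=1}^d g(s_j))^{1/d} ≤ g((s_1 ⋯ s_d)^{1/d}) for all 0 < s_1 ≤ … ≤ s_d. Define f(s) = exp(−1/g(s)). Then f also satisfies (∏_{j=1}^d f(s_j))^{1/d} ≤ f((s_1 ⋯ s_d)^{1/d}) for all 0 < s_1 ≤ … ≤ s_d. -/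
/-!
Write `G` for `g` at the geometric mean of the `s j`. By HM-GM for the numbers `g (s j)` and the
hypothesis on `g`, the mean of the `1 / g (s j)` is at least `1 / G`. Since
`(∏ exp (-1 / g (s j))) ^ (1 / d)` is the exponential of minus that mean, it is at most
`exp (-1 / G)`.
-/

open Finset Real

lemma Real.card_div_sum_inv_le_geom_mean {ι : Type*} (s : Finset ι) (hs : s.Nonempty)
    (z : ι → ℝ) (hz : ∀ i ∈ s, 0 < z i) :
    #s / ∑ i ∈ s, (z i)⁻¹ ≤ (∏ i ∈ s, z i) ^ (1 / (#s : ℝ)) := by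
  simpa using harm_mean_le_geom_mean s hs 1 z (fun _ _ ↦ one_pos) (by simpa using hs) hz

lemma Real.geom_mean_exp_sum {ι : Type*} (s : Finset ι) (y : ι → ℝ) :
    (∏ i ∈ s, exp (y i)) ^ (1 / (#s : ℝ)) = exp ((∑ i ∈ s, y i) / #s) := by
  rw [← exp_sum, ← exp_mul, mul_one_div]

lemma Real.geom_mean_exp_neg_inv_le {ι : Type*} (s : Finset ι) (hs : s.Nonempty)
    (x : ι → ℝ) (hx : ∀ i ∈ s, 0 < x i) {M : ℝ} (hM : (∏ i ∈ s, x i) ^ (1 / (#s : ℝ)) ≤ M) :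
    (∏ i ∈ s, exp (-1 / x i)) ^ (1 / (#s : ℝ)) ≤ exp (-1 / M) := by
  rw [geom_mean_exp_sum, exp_le_exp]
  have hcard : (0 : ℝ) < #s := by exact_mod_cast hs.card_pos
  have hsum : 0 < ∑ i ∈ s, (x i)⁻¹ := sum_pos (fun i hi ↦ inv_pos.2 (hx i hi)) hs
  have hharm : #s / ∑ i ∈ s, (x i)⁻¹ ≤ M :=
    (card_div_sum_inv_le_geom_mean s hs x hx).trans hM
  have hMpos : 0 < M := (div_pos hcard hsum).trans_le hharm
  have hmean : 1 / M ≤ (∑ i ∈ s, (x i)⁻¹) / #s := by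
    rw [div_le_div_iff₀ hMpos hcard]
    rw [div_le_iff₀ hsum] at hharm
    linarith
  simp only [neg_div, one_div, sum_neg_distrib] at hmean ⊢
  linarith

theorem stmt9_general (d : ℕ) (hd : 1 ≤ d) (g : ℝ → ℝ)
    (hgpos : ∀ s : ℝ, 0 < s → 0 < g s)
    (hg : ∀ s : Fin d → ℝ, (∀ j, 0 < s j) → Monotone s →
      (∏ j, g (s j)) ^ (1 / (d : ℝ)) ≤ g ((∏ j, s j) ^ (1 / (d : ℝ)))) :
    ∀ s : Fin d → ℝ, (∀ j, 0 < s j) → Monotone s →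
      (∏ j, Real.exp (-1 / g (s j))) ^ (1 / (d : ℝ))
        ≤ Real.exp (-1 / g ((∏ j, s j) ^ (1 / (d : ℝ)))) := by
  intro s hs hmono
  have : Nonempty (Fin d) := ⟨⟨0, hd⟩⟩
  simpa using geom_mean_exp_neg_inv_le univ univ_nonempty (fun j ↦ g (s j))
    (fun j _ ↦ hgpos _ (hs j)) (M := g ((∏ j, s j) ^ (1 / (d : ℝ)))) (by simpa using hg s hs hmono)

/-- if `g : (0,∞) → (0,∞)` is nondecreasing and satisfies
`(∏ g(s_j))^{1/d} ≤ g((s_1⋯s_d)^{1/d})` for all `0 < s_1 ≤ … ≤ s_d`, then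
`f(s) = exp(-1/g(s))` satisfies the same geometric-mean condition. -/
theorem stmt9 (d : ℕ) (hd : 1 ≤ d) (g : ℝ → ℝ)
    (hgpos : ∀ s : ℝ, 0 < s → 0 < g s)
    (hgmono : MonotoneOn g (Set.Ioi (0 : ℝ)))
    (hg : ∀ s : Fin d → ℝ, (∀ j, 0 < s j) → Monotone s →
      (∏ j, g (s j)) ^ (1 / (d : ℝ)) ≤ g ((∏ j, s j) ^ (1 / (d : ℝ)))) :
    ∀ s : Fin d → ℝ, (∀ j, 0 < s j) → Monotone s →
      (∏ j, Real.exp (-1 / g (s j))) ^ (1 / (d : ℝ))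
        ≤ Real.exp (-1 / g ((∏ j, s j) ^ (1 / (d : ℝ)))) :=
  stmt9_general d hd g hgpos hg
end

section
/- Let φ be C^{d} on an interval, with φ^{(d−2)}, φ^{(d−1)} defined near [t, t+h], h > 0, and φ^{(d−1)} nondecreasing. Let E be the parallelogram in ℝ² with vertices P_1 = (t, φ^{(d−2)}(t)), P_2 = P_1 − ρ e_2, P_3 = (t+h, φ^{(d−2)}(t+h)), P_4 = P_3 + ρ e_2, where ρ = h φ^{(d−1)}(t+h) + φ^{(d−2)}(t) − φ^{(d−2)}(t+h) ≥ 0. Then the two-dimensional Lebesgue measure of E satisfies m_2(E) ≤ h² (φ^{(d−1)}(t+h) − φ^{(d−1)}(t)), and the arc {(s, φ^{(d−2)}(s)) : t ≤ s ≤ t+h} is contained in E. -/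
open MeasureTheory Set

/-!
Write `f = φ^{(d-2)}`, so `f' = φ^{(d-1)}`. By the mean value theorem and the monotonicity of `f'`,
every chord of `f` over `[t, t + h]` has slope between `f' t` and `f' (t + h)`. The upper bound
places the arc between the two lines of slope `f' (t + h)` through `P₂` and `P₁`; the region between
them over `[t, t + h]` is the convex hull `E` of the four vertices, a sheared rectangle of area `h ρ`.
The lower bound, applied to the whole chord, gives `ρ ≤ h (f' (t + h) - f' t)`.
-/

theorem ContDiffOn.hasDerivAt_iteratedDeriv {𝕜 F : Type*} [NontriviallyNormedField 𝕜]
    [NormedAddCommGroup F] [NormedSpace 𝕜 F] {f : 𝕜 → F} {s : Set 𝕜} {n : WithTop ℕ∞} {m : ℕ}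
    {x : 𝕜} (hf : ContDiffOn 𝕜 n f s) (hs : IsOpen s) (hm : (m : WithTop ℕ∞) < n) (hx : x ∈ s) :
    HasDerivAt (iteratedDeriv m f) (iteratedDeriv (m + 1) f x) x := by
  have hdiff : DifferentiableOn 𝕜 (iteratedDeriv m f) s :=
    (hf.differentiableOn_iteratedDerivWithin hm hs.uniqueDiffOn).congr
      fun y hy => (iteratedDerivWithin_of_isOpen hs hy).symm
  rw [iteratedDeriv_succ]
  exact ((hdiff x hx).differentiableAt (hs.mem_nhds hx)).hasDerivAt

section MonotoneDeriv

variable {f f' : ℝ → ℝ} {a b : ℝ}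

theorem image_sub_le_mul_sub_of_monotoneOn_deriv (hf : ∀ x ∈ Icc a b, HasDerivAt f (f' x) x)
    (hf' : MonotoneOn f' (Icc a b)) {x y : ℝ} (hx : x ∈ Icc a b) (hy : y ∈ Icc a b)
    (hxy : x ≤ y) : f y - f x ≤ f' b * (y - x) := by
  have hb : b ∈ Icc a b := ⟨hx.1.trans (hxy.trans hy.2), le_rfl⟩
  refine (convex_Icc a b).image_sub_le_mul_sub_of_deriv_le
    (fun z hz => (hf z hz).continuousAt.continuousWithinAt)
    (fun z hz => (hf z (interior_subset hz)).differentiableAt.differentiableWithinAt)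
    (fun z hz => ?_) x hx y hy hxy
  rw [(hf z (interior_subset hz)).deriv]
  exact hf' (interior_subset hz) hb (interior_subset hz).2

theorem mul_sub_le_image_sub_of_monotoneOn_deriv (hf : ∀ x ∈ Icc a b, HasDerivAt f (f' x) x)
    (hf' : MonotoneOn f' (Icc a b)) {x y : ℝ} (hx : x ∈ Icc a b) (hy : y ∈ Icc a b)
    (hxy : x ≤ y) : f' a * (y - x) ≤ f y - f x := by
  have ha : a ∈ Icc a b := ⟨le_rfl, hx.1.trans (hxy.trans hy.2)⟩
  refine (convex_Icc a b).mul_sub_le_image_sub_of_le_deriv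
    (fun z hz => (hf z hz).continuousAt.continuousWithinAt)
    (fun z hz => (hf z (interior_subset hz)).differentiableAt.differentiableWithinAt)
    (fun z hz => ?_) x hx y hy hxy
  rw [(hf z (interior_subset hz)).deriv]
  exact hf' ha (interior_subset hz) (interior_subset hz).1

end MonotoneDeriv

def shearedRectangle (t h k y₀ ρ : ℝ) : Set (ℝ × ℝ) :=
  {p | p.1 ∈ Icc t (t + h) ∧ p.2 - k * (p.1 - t) ∈ Icc (y₀ - ρ) y₀}

section ShearedRectangle

variable {t h k y₀ ρ : ℝ}

theorem convex_shearedRectangle : Convex ℝ (shearedRectangle t h k y₀ ρ) := by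
  rintro p ⟨⟨hp₁, hp₂⟩, hp₃, hp₄⟩ q ⟨⟨hq₁, hq₂⟩, hq₃, hq₄⟩ a b ha hb hab
  simp only [shearedRectangle, mem_ofPred_eq, mem_Icc, Prod.fst_add, Prod.snd_add,
    Prod.smul_fst, Prod.smul_snd, smul_eq_mul]
  obtain rfl : b = 1 - a := by linarith
  refine ⟨⟨?_, ?_⟩, ?_, ?_⟩ <;> nlinarith [mul_nonneg ha hb]

theorem volume_shearedRectangle :
    volume (shearedRectangle t h k y₀ ρ) = ENNReal.ofReal h * ENNReal.ofReal ρ := by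
  have hshear : MeasurePreserving (fun p : ℝ × ℝ => (p.1, p.2 - k * (p.1 - t))) := by
    rw [Measure.volume_eq_prod]
    exact (MeasurePreserving.id volume).skew_product (g := fun x y => y - k * (x - t))
      (by fun_prop) (ae_of_all _ fun x => (measurePreserving_sub_right volume _).map_eq)
  calc volume (shearedRectangle t h k y₀ ρ)
      = volume ((fun p : ℝ × ℝ => (p.1, p.2 - k * (p.1 - t))) ⁻¹'
          (Icc t (t + h) ×ˢ Icc (y₀ - ρ) y₀)) := rfl
    _ = volume (Icc t (t + h) ×ˢ Icc (y₀ - ρ) y₀) :=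
      hshear.measure_preimage (measurableSet_Icc.prod measurableSet_Icc).nullMeasurableSet
    _ = ENNReal.ofReal h * ENNReal.ofReal ρ := by
      rw [Measure.volume_eq_prod, Measure.prod_prod, Real.volume_Icc, Real.volume_Icc,
        add_sub_cancel_left, sub_sub_cancel]

theorem convexHull_eq_shearedRectangle (hh : 0 < h) (hρ : 0 ≤ ρ) {y₁ : ℝ}
    (hy₁ : y₁ + ρ = y₀ + k * h) :
    convexHull ℝ {(t, y₀), (t, y₀ - ρ), (t + h, y₁), (t + h, y₁ + ρ)} =
      shearedRectangle t h k y₀ ρ := by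
  refine (convexHull_min ?_ convex_shearedRectangle).antisymm ?_
  · rintro p (rfl | rfl | rfl | rfl) <;>
      exact ⟨⟨by linarith, by linarith⟩, by linarith, by linarith⟩
  rintro ⟨s, y⟩ ⟨⟨hts, hst⟩, hlo, hhi⟩
  set V : Set (ℝ × ℝ) := {(t, y₀), (t, y₀ - ρ), (t + h, y₁), (t + h, y₁ + ρ)}
  have hE := convex_convexHull ℝ V
  have hvert := subset_convexHull ℝ V
  -- `(s, y)` lies on the vertical segment joining the points over `s` of the two slanted edges.
  have hu : (s - t) / h ∈ Icc (0 : ℝ) 1 :=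
    ⟨div_nonneg (by linarith) hh.le, (div_le_one hh).2 (by linarith)⟩
  have hline : ∀ c, AffineMap.lineMap (t, c) (t + h, c + k * h) ((s - t) / h) =
      (s, c + k * (s - t)) := by
    intro c
    rw [AffineMap.lineMap_apply_module]
    ext <;> simp <;> field_simp <;> ring
  have hbot : (s, y₀ - ρ + k * (s - t)) ∈ convexHull ℝ V := by
    rw [← hline, show y₀ - ρ + k * h = y₁ by linarith]
    exact hE.lineMap_mem (hvert (by simp [V])) (hvert (by simp [V])) hu
  have htop : (s, y₀ + k * (s - t)) ∈ convexHull ℝ V := by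
    rw [← hline]
    exact hE.lineMap_mem (hvert (by simp [V])) (hvert (by simp [V, hy₁])) hu
  refine hE.segment_subset hbot htop ?_
  rw [← Prod.image_mk_segment_right, segment_eq_Icc (by linarith)]
  exact ⟨y, ⟨by linarith, by linarith⟩, rfl⟩

end ShearedRectangle

theorem mem_shearedRectangle_of_monotoneOn_deriv {f f' : ℝ → ℝ} {t h s : ℝ}
    (hf : ∀ x ∈ Icc t (t + h), HasDerivAt f (f' x) x) (hf' : MonotoneOn f' (Icc t (t + h)))
    (hs : s ∈ Icc t (t + h)) :
    (s, f s) ∈ shearedRectangle t h (f' (t + h)) (f t) (h * f' (t + h) + f t - f (t + h)) := by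
  have hleft : t ∈ Icc t (t + h) := ⟨le_rfl, hs.1.trans hs.2⟩
  have hright : t + h ∈ Icc t (t + h) := ⟨hs.1.trans hs.2, le_rfl⟩
  have hupper := image_sub_le_mul_sub_of_monotoneOn_deriv hf hf' hleft hs hs.1
  have hlower := image_sub_le_mul_sub_of_monotoneOn_deriv hf hf' hs hright hs.2
  exact ⟨hs, by linarith, by linarith⟩

/-- with `f = φ^{(d-2)}`, `f' = φ^{(d-1)}` nondecreasing, the parallelogram
`E` with vertices `P₁ = (t, f t)`, `P₂ = P₁ - ρ e₂`, `P₃ = (t+h, f (t+h))`,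
`P₄ = P₃ + ρ e₂`, where `ρ = h f'(t+h) + f t - f (t+h)`, satisfies `ρ ≥ 0`,
`m₂(E) ≤ h² (f'(t+h) - f'(t))`, and contains the arc `{(s, f s) : t ≤ s ≤ t+h}`. -/
theorem stmt15 (d : ℕ) (hd : 2 ≤ d) (φ : ℝ → ℝ) (A B t h : ℝ) (hh : 0 < h)
    (hsub : Set.Icc t (t + h) ⊆ Set.Ioo A B)
    (hφ : ContDiffOn ℝ d φ (Set.Ioo A B))
    (hmono : MonotoneOn (iteratedDeriv (d - 1) φ) (Set.Ioo A B)) :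
    let f := iteratedDeriv (d - 2) φ
    let f' := iteratedDeriv (d - 1) φ
    let ρ := h * f' (t + h) + f t - f (t + h)
    let E := convexHull ℝ
      ({(t, f t), (t, f t - ρ), (t + h, f (t + h)), (t + h, f (t + h) + ρ)} :
        Set (ℝ × ℝ))
    0 ≤ ρ ∧
      volume E ≤ ENNReal.ofReal (h ^ 2 * (f' (t + h) - f' t)) ∧
      ∀ s ∈ Set.Icc t (t + h), (s, f s) ∈ E := by
  intro f f' ρ E
  have hf : ∀ x ∈ Icc t (t + h), HasDerivAt f (f' x) x := fun x hx => by
    have := hφ.hasDerivAt_iteratedDeriv isOpen_Ioo (m := d - 2)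
      (by exact_mod_cast (by omega : d - 2 < d)) (hsub hx)
    rwa [show d - 2 + 1 = d - 1 by omega] at this
  have hf' : MonotoneOn f' (Icc t (t + h)) := hmono.mono hsub
  have hleft : t ∈ Icc t (t + h) := ⟨le_rfl, by linarith⟩
  have hright : t + h ∈ Icc t (t + h) := ⟨by linarith, le_rfl⟩
  have hρ : 0 ≤ ρ := by
    have := image_sub_le_mul_sub_of_monotoneOn_deriv hf hf' hleft hright (by linarith)
    simp only [ρ]; linarith
  have hρ_le : ρ ≤ h * (f' (t + h) - f' t) := by
    have := mul_sub_le_image_sub_of_monotoneOn_deriv hf hf' hleft hright (by linarith)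
    simp only [ρ]; linarith
  have hE : E = shearedRectangle t h (f' (t + h)) (f t) ρ :=
    convexHull_eq_shearedRectangle hh hρ (by simp only [ρ]; ring)
  refine ⟨hρ, ?_, fun s hs => hE ▸ mem_shearedRectangle_of_monotoneOn_deriv hf hf' hs⟩
  rw [hE, volume_shearedRectangle, ← ENNReal.ofReal_mul hh.le]
  exact ENNReal.ofReal_le_ofReal (by nlinarith)
end

section
/- Let d ≥ 2 and let φ be C^d on (a,b) with φ', …, φ^{(d)} nonnegative and nondecreasing, and suppose 0 < α ≤ 2/(d(d+1)). Suppose that for the curve γ(t) = (t, t²/2, …, t^{d−1}/(d−1)!, φ(t)) and its arclength-parameter measure λ_γ we have λ_γ(E) ≤ B m_d(E)^α for all parallelepipeds E ⊂ ℝ^d. Then for all a < t < s < b, φ^{(d−1)}(s) − φ^{(d−1)}(t) ≥ B^{−1/α} (s − t)^{1/α + 1 − d(d+1)/2}. -/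
/-!
Put `h = s - t`, `n = d - 1` and `Δ = φ^{(n)}(s) - φ^{(n)}(t)`, and fix `ε > 0`. Taylor's
theorem of order `n` at `t`, applied coordinatewise, puts `γ(τ)` for every `τ ∈ (t, s)` into
`γ(t) + P`, where `P` is the parallelepiped spanned by `h^{j+1} γ^{(j+1)}(t)` (`j < n`) and by
`h^n (Δ + ε)` times the last basis vector: the polynomial coordinates of `γ` have no remainder,
and the remainder of `φ` lies in `[0, h^n Δ]` because `φ^{(n)}` is nondecreasing. The spanning
vectors form an upper triangular matrix, so `m_d(P) = h^{d(d+1)/2 - 1} (Δ + ε)`, and the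
hypothesis gives `h ≤ λ_γ(γ(t) + P) ≤ B (h^{d(d+1)/2 - 1} (Δ + ε))^α`. Solving for `Δ + ε` and
letting `ε → 0` gives the bound.
-/

open MeasureTheory Set
open scoped Pointwise

theorem taylorWithinEval_eq_taylorWithinEval_univ {f : ℝ → ℝ} {n : ℕ} {s : Set ℝ} {x₀ : ℝ}
    (hs : UniqueDiffOn ℝ s) (hx₀ : x₀ ∈ s) (hf : ContDiffAt ℝ n f x₀) :
    taylorWithinEval f n s x₀ = taylorWithinEval f n univ x₀ := by
  funext x
  simp only [taylor_within_apply, iteratedDerivWithin_univ]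
  refine Finset.sum_congr rfl fun k hk => ?_
  rw [iteratedDerivWithin_eq_iteratedDeriv hs (hf.of_le ?_) hx₀]
  exact_mod_cast Finset.mem_range_succ_iff.1 hk

theorem taylorWithinEval_univ_eq_add_sum (f : ℝ → ℝ) (n : ℕ) (x₀ x : ℝ) :
    taylorWithinEval f n univ x₀ x =
      f x₀ + ∑ j ∈ Finset.range n,
        (x - x₀) ^ (j + 1) / (j + 1).factorial * iteratedDeriv (j + 1) f x₀ := by
  rw [taylor_within_apply, Finset.sum_range_succ']
  simp only [iteratedDerivWithin_univ, iteratedDeriv_zero, smul_eq_mul]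
  simp [div_eq_inv_mul, mul_assoc, add_comm]

theorem sub_taylorWithinEval_mem_Icc_of_monotoneOn {f : ℝ → ℝ} {a b t τ : ℝ} {n : ℕ}
    (hf : ContDiffOn ℝ n f (Ioo a b)) (hmono : MonotoneOn (iteratedDeriv n f) (Ioo a b))
    (hat : a < t) (htτ : t < τ) (hτb : τ < b) :
    f τ - taylorWithinEval f n univ t τ ∈
      Icc 0 ((τ - t) ^ n / n.factorial * (iteratedDeriv n f τ - iteratedDeriv n f t)) := by
  have ht : t ∈ Ioo a b := ⟨hat, htτ.trans hτb⟩
  have hτ : τ ∈ Ioo a b := ⟨hat.trans htτ, hτb⟩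
  cases n with
  | zero =>
    simpa using hmono ht hτ htτ.le
  | succ n =>
    have hsub : uIcc t τ ⊆ Ioo a b := by
      rw [uIcc_of_le htτ.le]; exact Icc_subset_Ioo hat hτb
    obtain ⟨ξ, hξ, hlagrange⟩ :=
      taylor_mean_remainder_lagrange_iteratedDeriv htτ.ne (hf.mono hsub)
    rw [uIoo_of_lt htτ] at hξ
    rw [taylorWithinEval_eq_taylorWithinEval_univ (uniqueDiffOn_uIcc htτ.ne) left_mem_uIcc
      ((hf.of_le (by norm_cast; omega)).contDiffAt (isOpen_Ioo.mem_nhds ht))] at hlagrange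
    have hξ' : ξ ∈ Ioo a b := hsub (uIcc_of_le htτ.le ▸ Ioo_subset_Icc_self hξ)
    have hrem : f τ - taylorWithinEval f (n + 1) univ t τ = (τ - t) ^ (n + 1) / (n + 1).factorial *
        (iteratedDeriv (n + 1) f ξ - iteratedDeriv (n + 1) f t) := by
      rw [taylorWithinEval_succ, iteratedDerivWithin_univ, smul_eq_mul, ← sub_sub, hlagrange,
        Nat.factorial_succ]
      push_cast
      ring
    rw [hrem]
    have hcoef : 0 ≤ (τ - t) ^ (n + 1) / ((n + 1).factorial : ℝ) := by
      have := sub_pos.2 htτ; positivity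
    exact ⟨mul_nonneg hcoef (sub_nonneg.2 (hmono ht hξ' hξ.1.le)),
      mul_le_mul_of_nonneg_left (sub_le_sub_right (hmono hξ' hτ hξ.2.le) _) hcoef⟩

theorem iteratedDeriv_pow_div_factorial {𝕜 : Type*} [NontriviallyNormedField 𝕜] [CharZero 𝕜]
    (k p : ℕ) (x : 𝕜) :
    iteratedDeriv k (fun x : 𝕜 => x ^ p / p.factorial) x =
      if k ≤ p then x ^ (p - k) / (p - k).factorial else 0 := by
  rw [iteratedDeriv_div_const, iteratedDeriv_pow]
  split_ifs with hk
  · rw [← Nat.factorial_mul_descFactorial hk]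
    push_cast
    have hpos : (p.descFactorial k : 𝕜) ≠ 0 := Nat.cast_ne_zero.2 (Nat.descFactorial_pos.2 hk).ne'
    rw [mul_comm ((p - k).factorial : 𝕜), mul_div_mul_left _ _ hpos]
  · simp [Nat.descFactorial_eq_zero_iff_lt.2 (not_le.1 hk)]

theorem volume_vadd_parallelepiped {ι : Type*} [Fintype ι] [DecidableEq ι] (x₀ : ι → ℝ)
    (v : ι → ι → ℝ) :
    volume (x₀ +ᵥ parallelepiped v) = ENNReal.ofReal |(Matrix.of v).det| := by
  rw [measure_vadd, ← addHaarMeasure_eq_volume_pi, ← Module.Basis.parallelepiped_basisFun,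
    ← Module.Basis.addHaar_def, Measure.addHaar_parallelepiped, Pi.basisFun_det_apply]

theorem setOf_eq_add_sum_smul_eq_vadd_parallelepiped {ι : Type*} [Fintype ι] (x₀ : ι → ℝ)
    (v : ι → ι → ℝ) :
    {x : ι → ℝ | ∃ u : ι → ℝ, (∀ j, u j ∈ Icc (0 : ℝ) 1) ∧ x = x₀ + ∑ j, u j • v j} =
      x₀ +ᵥ parallelepiped v := by
  ext x
  simp [mem_vadd_set, mem_parallelepiped_iff, Pi.le_def, forall_and, eq_comm]

noncomputable def momentCoord (d : ℕ) (φ : ℝ → ℝ) (i : ℕ) (x : ℝ) : ℝ :=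
  if i + 1 < d then x ^ (i + 1) / (i + 1).factorial else φ x

theorem momentCoord_of_lt {d i : ℕ} (φ : ℝ → ℝ) (hi : i + 1 < d) :
    momentCoord d φ i = fun x : ℝ => x ^ (i + 1) / (i + 1).factorial := by
  funext x; simp [momentCoord, hi]

theorem momentCoord_self (n : ℕ) (φ : ℝ → ℝ) : momentCoord (n + 1) φ n = φ := by
  funext x; simp [momentCoord]

theorem iteratedDeriv_momentCoord_of_lt {d i k : ℕ} (φ : ℝ → ℝ) (hi : i + 1 < d) (hk : i + 1 < k)
    (x : ℝ) : iteratedDeriv k (momentCoord d φ i) x = 0 := by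
  rw [momentCoord_of_lt φ hi, iteratedDeriv_pow_div_factorial, if_neg (not_le.2 hk)]

theorem iteratedDeriv_momentCoord_self {d i : ℕ} (φ : ℝ → ℝ) (hi : i + 1 < d) (x : ℝ) :
    iteratedDeriv (i + 1) (momentCoord d φ i) x = 1 := by
  rw [momentCoord_of_lt φ hi, iteratedDeriv_pow_div_factorial, if_pos le_rfl]
  simp

theorem sub_taylorWithinEval_momentCoord_of_lt {n i : ℕ} (φ : ℝ → ℝ) (hi : i < n) {t τ : ℝ}
    (htτ : t < τ) :
    momentCoord (n + 1) φ i τ - taylorWithinEval (momentCoord (n + 1) φ i) n univ t τ = 0 := by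
  rw [momentCoord_of_lt φ (Nat.succ_lt_succ hi)]
  set f := fun x : ℝ => x ^ (i + 1) / (i + 1).factorial
  -- `f` has degree `≤ n`, so `f^{(n)}` is constant and the remainder bound pinches to `0`.
  have hconst : ∀ x, iteratedDeriv n f x = if n = i + 1 then 1 else 0 := by
    intro x
    rw [iteratedDeriv_pow_div_factorial]
    split_ifs <;> first | omega | simp [show i + 1 - n = 0 by omega]
  have hmono : MonotoneOn (iteratedDeriv n f) (Ioo (t - 1) (τ + 1)) :=
    fun x _ y _ _ => by rw [hconst x, hconst y]
  have := sub_taylorWithinEval_mem_Icc_of_monotoneOn (by fun_prop) hmono (by linarith) htτ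
    (by linarith)
  rwa [hconst, hconst, sub_self, mul_zero, Icc_self] at this

noncomputable def taylorFrame (n : ℕ) (φ : ℝ → ℝ) (t h c : ℝ) : Fin (n + 1) → Fin (n + 1) → ℝ :=
  Fin.lastCases (Pi.single (Fin.last n) (h ^ n * c))
    fun j i => h ^ ((j : ℕ) + 1) * iteratedDeriv ((j : ℕ) + 1) (momentCoord (n + 1) φ i) t

theorem taylorFrame_apply_of_lt {n : ℕ} (φ : ℝ → ℝ) (t h c : ℝ) {i j : Fin (n + 1)} (hij : i < j) :
    taylorFrame n φ t h c j i = 0 := by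
  cases j using Fin.lastCases with
  | last => simp [taylorFrame, hij.ne]
  | cast j =>
    have hj := j.isLt
    simp only [taylorFrame, Fin.lastCases_castSucc]
    rw [iteratedDeriv_momentCoord_of_lt φ (by omega) (by simpa [Fin.lt_def] using hij), mul_zero]

theorem taylorFrame_apply_self {n : ℕ} (φ : ℝ → ℝ) (t h c : ℝ) (j : Fin (n + 1)) :
    taylorFrame n φ t h c j j =
      Fin.lastCases (h ^ n * c) (fun j : Fin n => h ^ ((j : ℕ) + 1)) j := by
  cases j using Fin.lastCases with
  | last => simp [taylorFrame]
  | cast j =>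
    simp [taylorFrame, iteratedDeriv_momentCoord_self φ (by omega : (j : ℕ) + 1 < n + 1)]

theorem det_taylorFrame (n : ℕ) (φ : ℝ → ℝ) (t h c : ℝ) :
    (Matrix.of (taylorFrame n φ t h c)).det =
      h ^ (((n + 1 : ℕ) : ℝ) * ((n + 1 : ℕ) + 1) / 2 - 1) * c := by
  rw [Matrix.det_of_isUpperTriangular (M := Matrix.of (taylorFrame n φ t h c))
    fun j i hij => taylorFrame_apply_of_lt φ t h c hij]
  simp only [Matrix.of_apply, taylorFrame_apply_self, Fin.prod_univ_castSucc,
    Fin.lastCases_castSucc, Fin.lastCases_last, Fin.prod_univ_eq_prod_range (fun j => h ^ (j + 1)),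
    Finset.prod_pow_eq_pow_sum]
  have hgauss : (∑ j ∈ Finset.range n, (j + 1)) * 2 = (n + 1) * n := by
    induction n with
    | zero => rfl
    | succ n ih => rw [Finset.sum_range_succ, add_mul, ih]; ring
  have hexp : ((n + 1 : ℕ) : ℝ) * ((n + 1 : ℕ) + 1) / 2 - 1 =
      ((∑ j ∈ Finset.range n, (j + 1) + n : ℕ) : ℝ) := by
    have : ((∑ j ∈ Finset.range n, (j + 1) : ℕ) : ℝ) * 2 = (n + 1) * n := by exact_mod_cast hgauss
    push_cast at this ⊢
    linarith
  rw [hexp, Real.rpow_natCast, pow_add]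
  ring

theorem sub_taylorWithinEval_mem_Icc_pow_mul {n : ℕ} {φ : ℝ → ℝ} {a b t s τ c : ℝ}
    (hφ : ContDiffOn ℝ n φ (Ioo a b)) (hmono : MonotoneOn (iteratedDeriv n φ) (Ioo a b))
    (hat : a < t) (htτ : t < τ) (hτs : τ ≤ s) (hsb : s < b)
    (hc : iteratedDeriv n φ s - iteratedDeriv n φ t ≤ c) :
    φ τ - taylorWithinEval φ n univ t τ ∈ Icc 0 ((s - t) ^ n * c) := by
  have ht : t ∈ Ioo a b := ⟨hat, htτ.trans_le hτs |>.trans hsb⟩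
  have hτ : τ ∈ Ioo a b := ⟨hat.trans htτ, hτs.trans_lt hsb⟩
  have hs : s ∈ Ioo a b := ⟨hat.trans_le (htτ.le.trans hτs), hsb⟩
  obtain ⟨hR0, hR⟩ := sub_taylorWithinEval_mem_Icc_of_monotoneOn hφ hmono hat htτ hτ.2
  have hw : 0 < τ - t := sub_pos.2 htτ
  have hfac : (τ - t) ^ n / n.factorial ≤ (s - t) ^ n :=
    (div_le_self (by positivity) (by exact_mod_cast n.factorial_pos)).trans
      (pow_le_pow_left₀ hw.le (by linarith) _)
  have hderτs := hmono hτ hs hτs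
  exact ⟨hR0, hR.trans (mul_le_mul hfac (by linarith) (sub_nonneg.2 (hmono ht hτ htτ.le))
    (pow_nonneg (by linarith) _))⟩

theorem momentCurve_mem_vadd_parallelepiped_taylorFrame {n : ℕ} {φ : ℝ → ℝ} {a b t s τ c : ℝ}
    (hφ : ContDiffOn ℝ n φ (Ioo a b)) (hmono : MonotoneOn (iteratedDeriv n φ) (Ioo a b))
    (hat : a < t) (htτ : t < τ) (hτs : τ ≤ s) (hsb : s < b)
    (hc : iteratedDeriv n φ s - iteratedDeriv n φ t ≤ c) (hc0 : 0 < c) :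
    (fun i : Fin (n + 1) => momentCoord (n + 1) φ i τ) ∈
      (fun i : Fin (n + 1) => momentCoord (n + 1) φ i t) +ᵥ
        parallelepiped (taylorFrame n φ t (s - t) c) := by
  set h := s - t
  set w := τ - t
  set R := φ τ - taylorWithinEval φ n univ t τ
  have hw : 0 < w := sub_pos.2 htτ
  have hwh : w ≤ h := by linarith
  have hh : 0 < h := hw.trans_le hwh
  obtain ⟨hR0, hRc⟩ := sub_taylorWithinEval_mem_Icc_pow_mul hφ hmono hat htτ hτs hsb hc
  -- `u_j h^{j+1} = w^{j+1} / (j+1)!` are the Taylor coefficients; `u_n` absorbs `φ`'s remainder.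
  set u : Fin (n + 1) → ℝ := Fin.lastCases (R / (h ^ n * c))
    fun j : Fin n => (w / h) ^ ((j : ℕ) + 1) / ((j : ℕ) + 1).factorial
  have hu : u ∈ Icc 0 1 := by
    simp only [mem_Icc, Pi.le_def, ← forall_and]
    intro j
    cases j using Fin.lastCases with
    | last =>
      simp only [u, Fin.lastCases_last, Pi.zero_apply, Pi.one_apply]
      exact ⟨by positivity, div_le_one_of_le₀ hRc (by positivity)⟩
    | cast j =>
      simp only [u, Fin.lastCases_castSucc, Pi.zero_apply, Pi.one_apply]
      have hfac : (1 : ℝ) ≤ ((j : ℕ) + 1).factorial := by exact_mod_cast Nat.factorial_pos _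
      exact ⟨by positivity, (div_le_self (by positivity) hfac).trans
        (pow_le_one₀ (by positivity) ((div_le_one hh).2 hwh))⟩
  refine mem_vadd_set.2 ⟨_, (mem_parallelepiped_iff _ _).2 ⟨u, hu, rfl⟩, ?_⟩
  funext i
  have hterm : ∀ j : Fin n, u j.castSucc * taylorFrame n φ t h c j.castSucc i =
      w ^ ((j : ℕ) + 1) / ((j : ℕ) + 1).factorial *
        iteratedDeriv ((j : ℕ) + 1) (momentCoord (n + 1) φ i) t := by
    intro j
    simp only [u, taylorFrame, Fin.lastCases_castSucc, div_pow]
    field_simp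
  have hlast : u (Fin.last n) * taylorFrame n φ t h c (Fin.last n) i =
      if i = Fin.last n then R else 0 := by
    simp only [u, taylorFrame, Fin.lastCases_last, Pi.single_apply]
    split_ifs
    · field_simp
    · rw [mul_zero]
  have hrem : momentCoord (n + 1) φ i τ - taylorWithinEval (momentCoord (n + 1) φ i) n univ t τ =
      if i = Fin.last n then R else 0 := by
    cases i using Fin.lastCases with
    | last => simp [R, momentCoord_self]
    | cast i =>
      rw [if_neg (Fin.castSucc_lt_last i).ne]
      exact sub_taylorWithinEval_momentCoord_of_lt φ i.isLt htτ
  rw [taylorWithinEval_univ_eq_add_sum] at hrem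
  simp only [vadd_eq_add, Pi.add_apply, Finset.sum_apply, Pi.smul_apply, smul_eq_mul,
    Fin.sum_univ_castSucc, hterm, hlast]
  rw [Fin.sum_univ_eq_sum_range (fun j => w ^ (j + 1) / (j + 1).factorial *
    iteratedDeriv (j + 1) (momentCoord (n + 1) φ i) t)]
  linarith

theorem rpow_neg_inv_mul_rpow_sub_le {B α h K X : ℝ} (hB : 0 < B) (hα : 0 < α) (hh : 0 < h)
    (hX : 0 ≤ X) (H : h ≤ B * (h ^ K * X) ^ α) : B ^ (-(1 / α)) * h ^ (1 / α - K) ≤ X := by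
  have hroot : h ^ (1 / α) ≤ B ^ (1 / α) * (h ^ K * X) :=
    calc h ^ (1 / α) ≤ (B * (h ^ K * X) ^ α) ^ (1 / α) := by gcongr
      _ = B ^ (1 / α) * (h ^ K * X) := by
        rw [Real.mul_rpow hB.le (by positivity), ← Real.rpow_mul (by positivity),
          mul_one_div_cancel hα.ne', Real.rpow_one]
  calc B ^ (-(1 / α)) * h ^ (1 / α - K) = B ^ (-(1 / α)) * h ^ (1 / α) / h ^ K := by
        rw [Real.rpow_sub hh, mul_div_assoc]
    _ ≤ B ^ (-(1 / α)) * (B ^ (1 / α) * (h ^ K * X)) / h ^ K := by gcongr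
    _ = X := by
        rw [← mul_assoc, ← Real.rpow_add hB, neg_add_cancel, Real.rpow_zero, one_mul,
          mul_div_cancel_left₀ _ (by positivity)]

theorem stmt17_general (d : ℕ) (hd : 2 ≤ d) (a b : ℝ) (φ : ℝ → ℝ) (α B : ℝ)
    (hα0 : 0 < α) (hB : 0 < B)
    (hφ : ContDiffOn ℝ d φ (Set.Ioo a b))
    (hder : ∀ i : ℕ, 1 ≤ i → i ≤ d →
      (∀ x ∈ Set.Ioo a b, 0 ≤ iteratedDeriv i φ x) ∧
        MonotoneOn (iteratedDeriv i φ) (Set.Ioo a b))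
    (hrestr : ∀ (x₀ : Fin d → ℝ) (v : Fin d → (Fin d → ℝ)), LinearIndependent ℝ v →
      (volume {t ∈ Set.Ioo a b |
          (fun i : Fin d => if (i : ℕ) + 1 < d
              then t ^ ((i : ℕ) + 1) / (Nat.factorial ((i : ℕ) + 1)) else φ t)
            ∈ {x : Fin d → ℝ | ∃ u : Fin d → ℝ,
                (∀ j, u j ∈ Set.Icc (0 : ℝ) 1) ∧ x = x₀ + ∑ j, u j • v j}}).toReal
        ≤ B * (volume {x : Fin d → ℝ | ∃ u : Fin d → ℝ,
            (∀ j, u j ∈ Set.Icc (0 : ℝ) 1) ∧ x = x₀ + ∑ j, u j • v j}).toReal ^ α) :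
    ∀ t s : ℝ, a < t → t < s → s < b →
      iteratedDeriv (d - 1) φ s - iteratedDeriv (d - 1) φ t
        ≥ B ^ (-(1 / α)) * (s - t) ^ (1 / α + 1 - (d : ℝ) * (d + 1) / 2) := by
  intro t s hat hts hsb
  obtain ⟨n, rfl⟩ : ∃ n, d = n + 1 := ⟨d - 1, by omega⟩
  rw [Nat.add_sub_cancel, ge_iff_le]
  have hmono := (hder n (by omega) n.le_succ).2
  have hΔ := hmono ⟨hat, hts.trans hsb⟩ ⟨hat.trans hts, hsb⟩ hts.le
  refine le_of_forall_pos_le_add fun ε hε => ?_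
  set c := iteratedDeriv n φ s - iteratedDeriv n φ t + ε
  have hc0 : 0 < c := by linarith
  set v := taylorFrame n φ t (s - t) c
  set x₀ := fun i : Fin (n + 1) => momentCoord (n + 1) φ i t
  have hdet := det_taylorFrame n φ t (s - t) c
  have hdet0 : 0 < (Matrix.of v).det := by rw [hdet]; have := sub_pos.2 hts; positivity
  have hbound := hrestr x₀ v (Matrix.linearIndependent_rows_of_det_ne_zero hdet0.ne')
  rw [setOf_eq_add_sum_smul_eq_vadd_parallelepiped, volume_vadd_parallelepiped,
    ENNReal.toReal_ofReal (abs_nonneg _), abs_of_pos hdet0, hdet] at hbound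
  have harc : s - t ≤ (volume {τ ∈ Ioo a b |
      (fun i : Fin (n + 1) => momentCoord (n + 1) φ i τ) ∈ x₀ +ᵥ parallelepiped v}).toReal := by
    rw [← ENNReal.toReal_ofReal (sub_nonneg.2 hts.le), ← Real.volume_Ioo]
    refine ENNReal.toReal_mono ((measure_mono (sep_subset _ _)).trans_lt measure_Ioo_lt_top).ne
      (measure_mono fun τ hτ => ⟨⟨hat.trans hτ.1, hτ.2.trans hsb⟩, ?_⟩)
    exact momentCurve_mem_vadd_parallelepiped_taylorFrame (hφ.of_le (by exact_mod_cast n.le_succ))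
      hmono hat hτ.1 hτ.2.le hsb (by linarith) hc0
  rw [show 1 / α + 1 - ((n + 1 : ℕ) : ℝ) * ((n + 1 : ℕ) + 1) / 2 =
    1 / α - (((n + 1 : ℕ) : ℝ) * ((n + 1 : ℕ) + 1) / 2 - 1) by ring]
  exact rpow_neg_inv_mul_rpow_sub_le hB hα0 (sub_pos.2 hts) hc0.le (harc.trans hbound)

/-- if the curve `γ(t) = (t, t²/2, …, t^{d-1}/(d-1)!, φ(t))` with `φ'`,
…, `φ^{(d)}` nonnegative and nondecreasing satisfies `λ_γ(E) ≤ B m_d(E)^α` for all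
parallelepipeds `E ⊂ ℝ^d`, where `0 < α ≤ 2/(d(d+1))`, then
`φ^{(d-1)}(s) - φ^{(d-1)}(t) ≥ B^{-1/α} (s-t)^{1/α + 1 - d(d+1)/2}` for `a < t < s < b`. -/
theorem stmt17 (d : ℕ) (hd : 2 ≤ d) (a b : ℝ) (φ : ℝ → ℝ) (α B : ℝ)
    (hα0 : 0 < α) (hα1 : α ≤ 2 / ((d : ℝ) * (d + 1))) (hB : 0 < B)
    (hφ : ContDiffOn ℝ d φ (Set.Ioo a b))
    (hder : ∀ i : ℕ, 1 ≤ i → i ≤ d →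
      (∀ x ∈ Set.Ioo a b, 0 ≤ iteratedDeriv i φ x) ∧
        MonotoneOn (iteratedDeriv i φ) (Set.Ioo a b))
    (hrestr : ∀ (x₀ : Fin d → ℝ) (v : Fin d → (Fin d → ℝ)), LinearIndependent ℝ v →
      (volume {t ∈ Set.Ioo a b |
          (fun i : Fin d => if (i : ℕ) + 1 < d
              then t ^ ((i : ℕ) + 1) / (Nat.factorial ((i : ℕ) + 1)) else φ t)
            ∈ {x : Fin d → ℝ | ∃ u : Fin d → ℝ,
                (∀ j, u j ∈ Set.Icc (0 : ℝ) 1) ∧ x = x₀ + ∑ j, u j • v j}}).toReal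
        ≤ B * (volume {x : Fin d → ℝ | ∃ u : Fin d → ℝ,
            (∀ j, u j ∈ Set.Icc (0 : ℝ) 1) ∧ x = x₀ + ∑ j, u j • v j}).toReal ^ α) :
    ∀ t s : ℝ, a < t → t < s → s < b →
      iteratedDeriv (d - 1) φ s - iteratedDeriv (d - 1) φ t
        ≥ B ^ (-(1 / α)) * (s - t) ^ (1 / α + 1 - (d : ℝ) * (d + 1) / 2) :=
  stmt17_general d hd a b φ α B hα0 hB hφ hder hrestr
end
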